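/- arXiv:1510.01022 — 10 statements merged into one kernel-verified Lean document; each statement's English description precedes it below -/
import Mathlib

section
/- Let $n_1, n_2$ be distinct odd primes with $\gcd(n_1-1, n_2-1)=6$, $n = n_1 n_2$, $e = (n_1-1)(n_2-1)/6$, $g$ a common primitive root modulo $n_1$ and $n_2$, and $x$ an integer with $x \equiv g \pmod{n_1}$ and $x \equiv 1 \pmod{n_2}$. Define $D_i = \{g^s x^i \bmod n : 0 \le s < e\}$ for $0 \le i \le 5$. Then the sets $D_0, \dots, D_5$ are pairwise disjoint and their union equals the multiplicative group $(\mathbb{Z}/n\mathbb{Z})^*$. -/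
open Finset Polynomial

/-- The Whiteman generalized cyclotomic class `D_i` of order 6 modulo `n = n1 * n2`,
given a common primitive root `g` and the CRT element `x`. -/
def whitemanD (n1 n2 g x : ℕ) (i : ℕ) : Finset ℕ :=
  (Finset.range ((n1 - 1) * (n2 - 1) / 6)).image (fun s => g ^ s * x ^ i % (n1 * n2))

/-- The set `{k * a : 1 ≤ k ≤ b - 1}` of nonzero multiples of `a` below `a * b`. -/
def multSet (a b : ℕ) : Finset ℕ :=
  (Finset.Icc 1 (b - 1)).image (fun k => k * a)

private lemma unit_pow_modEq {M : Type*} [Monoid M] {a : M} (h : IsUnit a)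
    {m n : ℕ} (hmn : a ^ m = a ^ n) : m ≡ n [MOD orderOf a] := by
  obtain ⟨u, rfl⟩ := h
  have hu : u ^ m = u ^ n := Units.ext (by simpa using hmn)
  rw [orderOf_units]
  exact pow_eq_pow_iff_modEq.mp hu

private lemma coprime_mod (a n : ℕ) (h : Nat.Coprime a n) : Nat.Coprime (a % n) n := by
  have : Nat.gcd n a = Nat.gcd (a % n) n := Nat.gcd_rec n a
  unfold Nat.Coprime at *
  rw [← this]
  exact Nat.coprime_comm.mp h


theorem whiteman_partition
    (n1 n2 : ℕ) (hp1 : n1.Prime) (hp2 : n2.Prime) (hne : n1 ≠ n2)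
    (ho1 : Odd n1) (ho2 : Odd n2)
    (hgcd : Nat.gcd (n1 - 1) (n2 - 1) = 6)
    (g x : ℕ)
    (hg1 : orderOf (g : ZMod n1) = n1 - 1)
    (hg2 : orderOf (g : ZMod n2) = n2 - 1)
    (hx1 : x % n1 = g % n1) (hx2 : x % n2 = 1 % n2) :
    (∀ i < 6, ∀ j < 6, i ≠ j →
      Disjoint (whitemanD n1 n2 g x i) (whitemanD n1 n2 g x j)) ∧
    (Finset.range 6).biUnion (whitemanD n1 n2 g x) =
      (Finset.range (n1 * n2)).filter (fun m => Nat.Coprime m (n1 * n2)) := by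
  haveI : NeZero n1 := ⟨hp1.pos.ne'⟩
  haveI : NeZero n2 := ⟨hp2.pos.ne'⟩
  set e := (n1 - 1) * (n2 - 1) / 6 with he
  set N := n1 * n2 with hN
  have hn1 : 2 < n1 := lt_of_le_of_ne hp1.two_le (fun h => (Nat.not_odd_iff_even.mpr (h ▸ even_two)) ho1)
  have hn2 : 2 < n2 := lt_of_le_of_ne hp2.two_le (fun h => (Nat.not_odd_iff_even.mpr (h ▸ even_two)) ho2)
  have h61 : 6 ∣ (n1 - 1) := hgcd ▸ Nat.gcd_dvd_left _ _
  have h62 : 6 ∣ (n2 - 1) := hgcd ▸ Nat.gcd_dvd_right _ _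
  have h6e : 6 * e = (n1 - 1) * (n2 - 1) := by
    rw [he]; exact Nat.mul_div_cancel' (Dvd.dvd.mul_right h61 _) 
  have hlcm : Nat.lcm (n1 - 1) (n2 - 1) = e := by
    have := Nat.gcd_mul_lcm (n1 - 1) (n2 - 1)
    rw [hgcd] at this
    omega
  have hNpos : 0 < N := Nat.mul_pos hp1.pos hp2.pos
  -- units
  have hu1 : IsUnit ((g : ZMod n1)) := by
    refine IsOfFinOrder.isUnit ?_
    rw [← orderOf_pos_iff, hg1]; omega
  have hu2 : IsUnit ((g : ZMod n2)) := by
    refine IsOfFinOrder.isUnit ?_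
    rw [← orderOf_pos_iff, hg2]; omega
  have hxg1 : ((x : ZMod n1)) = (g : ZMod n1) := (ZMod.natCast_eq_natCast_iff _ _ _).mpr hx1
  have hxg2 : ((x : ZMod n2)) = (1 : ZMod n2) := by
    have : ((x : ZMod n2)) = ((1 : ℕ) : ZMod n2) := (ZMod.natCast_eq_natCast_iff _ _ _).mpr hx2
    simpa using this
  -- key injectivity
  have key : ∀ i < 6, ∀ j < 6, ∀ s < e, ∀ t < e,
      g ^ s * x ^ i % N = g ^ t * x ^ j % N → i = j ∧ s = t := by
    intro i hi j hj s hs t ht hmod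
    have hmN : g ^ s * x ^ i ≡ g ^ t * x ^ j [MOD N] := hmod
    have hm1 : g ^ s * x ^ i ≡ g ^ t * x ^ j [MOD n1] :=
      hmN.of_dvd (Dvd.intro _ rfl)
    have hm2 : g ^ s * x ^ i ≡ g ^ t * x ^ j [MOD n2] :=
      hmN.of_dvd (Dvd.intro_left _ rfl)
    have hz1 : ((g : ZMod n1)) ^ (s + i) = ((g : ZMod n1)) ^ (t + j) := by
      have := (ZMod.natCast_eq_natCast_iff _ _ n1).mpr hm1
      push_cast at this
      rw [hxg1] at this
      rw [pow_add, pow_add]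
      exact this
    have hz2 : ((g : ZMod n2)) ^ s = ((g : ZMod n2)) ^ t := by
      have := (ZMod.natCast_eq_natCast_iff _ _ n2).mpr hm2
      push_cast at this
      rw [hxg2] at this
      simpa using this
    have hc1 : s + i ≡ t + j [MOD n1 - 1] := hg1 ▸ unit_pow_modEq hu1 hz1
    have hc2 : s ≡ t [MOD n2 - 1] := hg2 ▸ unit_pow_modEq hu2 hz2
    have hd1 : ((n1 - 1 : ℕ) : ℤ) ∣ ((t : ℤ) + j) - ((s : ℤ) + i) := by
      have := (Nat.modEq_iff_dvd).mp hc1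
      push_cast at this ⊢
      convert this using 1
    have hd2 : ((n2 - 1 : ℕ) : ℤ) ∣ (t : ℤ) - s := by
      have := (Nat.modEq_iff_dvd).mp hc2
      push_cast at this ⊢
      exact this
    have h6d1 : (6 : ℤ) ∣ ((t : ℤ) + j) - ((s : ℤ) + i) :=
      dvd_trans (by exact_mod_cast Int.natCast_dvd_natCast.mpr h61) hd1
    have h6d2 : (6 : ℤ) ∣ (t : ℤ) - s :=
      dvd_trans (by exact_mod_cast Int.natCast_dvd_natCast.mpr h62) hd2
    have hij : i = j := by omega
    subst hij
    have hd1' : ((n1 - 1 : ℕ) : ℤ) ∣ (t : ℤ) - s := by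
      rw [show ((t : ℤ) - s) = ((t : ℤ) + i) - ((s : ℤ) + i) by ring]
      exact hd1
    have hdn : (n1 - 1) ∣ ((t : ℤ) - s).natAbs := by
      have := Int.natAbs_dvd_natAbs.mpr hd1'
      simpa using this
    have hdn2 : (n2 - 1) ∣ ((t : ℤ) - s).natAbs := by
      have := Int.natAbs_dvd_natAbs.mpr hd2
      simpa using this
    have hle : e ∣ ((t : ℤ) - s).natAbs := hlcm ▸ Nat.lcm_dvd hdn hdn2
    have hlt : ((t : ℤ) - s).natAbs < e := by omega
    have := Nat.eq_zero_of_dvd_of_lt hle hlt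
    omega
  -- coprimality
  have hgcop : Nat.Coprime g N := by
    refine Nat.Coprime.mul_right ?_ ?_
    · exact (ZMod.isUnit_iff_coprime g n1).mp hu1
    · exact (ZMod.isUnit_iff_coprime g n2).mp hu2
  have hxcop : Nat.Coprime x N := by
    refine Nat.Coprime.mul_right ?_ ?_
    · exact (ZMod.isUnit_iff_coprime x n1).mp (hxg1 ▸ hu1)
    · exact (ZMod.isUnit_iff_coprime x n2).mp (hxg2 ▸ isUnit_one)
  have hcop : ∀ s i, Nat.Coprime (g ^ s * x ^ i % N) N := fun s i =>
    coprime_mod _ _ ((hgcop.pow_left s).mul (hxcop.pow_left i))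
  -- disjointness
  have hdisj : ∀ i < 6, ∀ j < 6, i ≠ j →
      Disjoint (whitemanD n1 n2 g x i) (whitemanD n1 n2 g x j) := by
    intro i hi j hj hij
    rw [Finset.disjoint_left]
    intro m hmi hmj
    simp only [whitemanD, Finset.mem_image, Finset.mem_range] at hmi hmj
    obtain ⟨s, hs, hsm⟩ := hmi
    obtain ⟨t, ht, htm⟩ := hmj
    exact hij ((key i hi j hj s hs t ht (hsm.trans htm.symm)).1)
  refine ⟨hdisj, ?_⟩
  -- cardinalities
  have hcard : ∀ i < 6, (whitemanD n1 n2 g x i).card = e := by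
    intro i hi
    rw [whitemanD]
    rw [Finset.card_image_of_injOn, Finset.card_range]
    intro s hs t ht hst
    simp only [Finset.mem_coe, Finset.mem_range] at hs ht
    exact (key i hi i hi s hs t ht hst).2
  have hbc : ((Finset.range 6).biUnion (whitemanD n1 n2 g x)).card = 6 * e := by
    rw [Finset.card_biUnion (fun i hi j hj hij =>
      hdisj i (Finset.mem_range.mp hi) j (Finset.mem_range.mp hj) hij)]
    rw [Finset.sum_congr rfl (fun i hi => hcard i (Finset.mem_range.mp hi))]
    simp
  have hfc : ((Finset.range N).filter (fun m => Nat.Coprime m N)).card = 6 * e := by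
    have heq : ((Finset.range N).filter (fun m => Nat.Coprime m N)) =
        ((Finset.range N).filter N.Coprime) := by
      apply Finset.filter_congr
      intro m _
      simp [Nat.coprime_comm]
    rw [heq, ← Nat.totient_eq_card_coprime]
    have htm := Nat.totient_mul ((Nat.coprime_primes hp1 hp2).mpr hne)
    rw [Nat.totient_prime hp1, Nat.totient_prime hp2] at htm
    rw [hN, htm, h6e]
  have hsub : (Finset.range 6).biUnion (whitemanD n1 n2 g x) ⊆
      (Finset.range N).filter (fun m => Nat.Coprime m N) := by
    intro m hm
    simp only [Finset.mem_biUnion, Finset.mem_range, whitemanD, Finset.mem_image] at hm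
    obtain ⟨i, hi, s, hs, rfl⟩ := hm
    simp only [Finset.mem_filter, Finset.mem_range]
    exact ⟨Nat.mod_lt _ hNpos, hcop s i⟩
  exact Finset.eq_of_subset_of_card_le hsub (by rw [hfc, hbc])
end

section
/- With the Whiteman generalized cyclotomic classes $D_0,\dots,D_5$ of order 6 modulo $n = n_1 n_2$, for each $0 \le j \le 5$ the multiset $D_j \bmod n_1$ consists of each element of $\{1, 2, \dots, n_1 - 1\}$ repeated exactly $(n_2-1)/6$ times; equivalently, for every residue $c$ with $1 \le c \le n_1 - 1$, the number of elements $d \in D_j$ with $d \equiv c \pmod{n_1}$ equals $(n_2-1)/6$. -/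
open Finset Polynomial

/-!
Modulo `n1` an element `g ^ s * x ^ j` of `D_j` is `g ^ (s + j)`, and modulo `n2` it is `g ^ s`.
Hence `s ↦ g ^ s * x ^ j mod n` is injective on `s < e`, because
`e = lcm (n1 - 1) (n2 - 1)` when `gcd (n1 - 1) (n2 - 1) = 6`. Since the `n1 - 1` powers of `g`
exhaust the nonzero residues mod `n1`, the residue `c` is hit exactly by the `s` in one class
modulo `n1 - 1`, and `s < e = (n1 - 1) * ((n2 - 1) / 6)` runs through every class
`(n2 - 1) / 6` times.
-/

theorem Nat.card_filter_range_mul_add_modEq {d : ℕ} (hd : 0 < d) (m j t : ℕ) :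
    #{s ∈ range (d * m) | s + j ≡ t [MOD d]} = m := by
  have hshift : t + d * j - j + j ≡ t [MOD d] := by
    rw [Nat.sub_add_cancel (by nlinarith)]
    exact Nat.add_mul_mod_self_left t d j
  have hiff : ∀ s, s + j ≡ t [MOD d] ↔ s ≡ t + d * j - j [MOD d] := fun s =>
    ⟨fun h => Nat.ModEq.add_right_cancel' j (h.trans hshift.symm),
      fun h => (h.add_right j).trans hshift⟩
  simp_rw [hiff, ← Nat.count_eq_card_filter_range, Nat.count_modEq_card _ hd,
    Nat.mul_div_cancel_left m hd, Nat.mul_mod_right]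
  simp

theorem ZMod.exists_pow_eq_of_orderOf_eq_sub_one {n : ℕ} [NeZero n] {a : ZMod n}
    (ha : orderOf a = n - 1) {c : ZMod n} (hc : c ≠ 0) : ∃ t, a ^ t = c := by
  have hn : 1 < n := by
    by_contra! h
    obtain rfl : n = 1 := by have := NeZero.pos n; omega
    exact hc (Subsingleton.elim _ _)
  have : Fact (1 < n) := ⟨hn⟩
  have ha_unit : IsUnit a := (orderOf_pos_iff.mp (by omega)).isUnit
  have hsub : (range (n - 1)).image (a ^ ·) ⊆ univ.erase 0 := by
    intro y hy
    obtain ⟨t, -, rfl⟩ := mem_image.mp hy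
    exact mem_erase.mpr ⟨(ha_unit.pow t).ne_zero, mem_univ _⟩
  have hcard : #(univ.erase (0 : ZMod n)) ≤ #((range (n - 1)).image (a ^ ·)) := by
    rw [card_image_of_injOn (by rw [coe_range, ← ha]; exact pow_injOn_Iio_orderOf),
      card_erase_of_mem (mem_univ _), card_univ, ZMod.card, card_range]
  have hc_mem : c ∈ (range (n - 1)).image (a ^ ·) :=
    eq_of_subset_of_card_le hsub hcard ▸ mem_erase.mpr ⟨hc, mem_univ c⟩
  obtain ⟨t, -, ht⟩ := mem_image.mp hc_mem
  exact ⟨t, ht⟩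

section Whiteman

variable {n1 n2 g x : ℕ}

theorem natCast_whiteman_left (hx : (x : ZMod n1) = g) (s j : ℕ) :
    ((g ^ s * x ^ j % (n1 * n2) : ℕ) : ZMod n1) = (g : ZMod n1) ^ (s + j) := by
  rw [(ZMod.natCast_eq_natCast_iff' _ (g ^ s * x ^ j) n1).mpr
    (Nat.mod_mod_of_dvd _ (dvd_mul_right n1 n2))]
  push_cast
  rw [hx, pow_add]

theorem natCast_whiteman_right (hx : (x : ZMod n2) = 1) (s j : ℕ) :
    ((g ^ s * x ^ j % (n1 * n2) : ℕ) : ZMod n2) = (g : ZMod n2) ^ s := by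
  rw [(ZMod.natCast_eq_natCast_iff' _ (g ^ s * x ^ j) n2).mpr
    (Nat.mod_mod_of_dvd _ (dvd_mul_left n2 n1))]
  push_cast
  rw [hx, one_pow, mul_one]

theorem injOn_whiteman (hx1 : (x : ZMod n1) = g) (hx2 : (x : ZMod n2) = 1) (j : ℕ) :
    Set.InjOn (fun s => g ^ s * x ^ j % (n1 * n2))
      (Set.Iio (Nat.lcm (orderOf (g : ZMod n1)) (orderOf (g : ZMod n2)))) := by
  intro s hs t ht hst
  obtain ⟨hpos1, hpos2⟩ := Nat.lcm_pos_iff.mp (Nat.zero_lt_of_lt (Set.mem_Iio.mp hs))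
  have hfin1 : IsOfFinOrder (g : ZMod n1) := orderOf_pos_iff.mp hpos1
  have hfin2 : IsOfFinOrder (g : ZMod n2) := orderOf_pos_iff.mp hpos2
  have h1 : (g : ZMod n1) ^ (s + j) = (g : ZMod n1) ^ (t + j) := by
    simpa only [natCast_whiteman_left hx1] using congrArg (Nat.cast : ℕ → ZMod n1) hst
  have h2 : (g : ZMod n2) ^ s = (g : ZMod n2) ^ t := by
    simpa only [natCast_whiteman_right hx2] using congrArg (Nat.cast : ℕ → ZMod n2) hst
  exact (Nat.mod_lcm (Nat.ModEq.add_right_cancel' j (hfin1.pow_eq_pow_iff_modEq.mp h1))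
    (hfin2.pow_eq_pow_iff_modEq.mp h2)).eq_of_lt_of_lt hs ht

end Whiteman

theorem whitemanD_mod_n1_uniform_general
    (n1 n2 : ℕ)
    (hgcd : Nat.gcd (n1 - 1) (n2 - 1) = 6)
    (g x : ℕ)
    (hg1 : orderOf (g : ZMod n1) = n1 - 1)
    (hg2 : orderOf (g : ZMod n2) = n2 - 1)
    (hx1 : x % n1 = g % n1) (hx2 : x % n2 = 1 % n2) :
    ∀ j ≤ 5, ∀ c, 1 ≤ c → c ≤ n1 - 1 →
      ((whitemanD n1 n2 g x j).filter (fun d => d % n1 = c)).card = (n2 - 1) / 6 := by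
  intro j _ c hc1 hc2
  have hx1' : (x : ZMod n1) = g := (ZMod.natCast_eq_natCast_iff' x g n1).mpr hx1
  have hx2' : (x : ZMod n2) = 1 := by
    exact_mod_cast (ZMod.natCast_eq_natCast_iff' x 1 n2).mpr hx2
  have hlcm : Nat.lcm (n1 - 1) (n2 - 1) = (n1 - 1) * (n2 - 1) / 6 := by rw [Nat.lcm, hgcd]
  have hsize : (n1 - 1) * (n2 - 1) / 6 = (n1 - 1) * ((n2 - 1) / 6) :=
    Nat.mul_div_assoc _ (hgcd ▸ Nat.gcd_dvd_right _ _)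
  have : NeZero n1 := ⟨by omega⟩
  obtain ⟨t, ht⟩ := ZMod.exists_pow_eq_of_orderOf_eq_sub_one hg1 (c := c)
    (by rw [Ne, ZMod.natCast_eq_zero_iff]; exact Nat.not_dvd_of_pos_of_lt hc1 (by omega))
  have hfin : IsOfFinOrder (g : ZMod n1) := orderOf_pos_iff.mp (by omega)
  have hres : ∀ s, g ^ s * x ^ j % (n1 * n2) % n1 = c ↔ s + j ≡ t [MOD n1 - 1] := fun s => by
    rw [← hg1, ← hfin.pow_eq_pow_iff_modEq, ht, ← natCast_whiteman_left hx1',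
      ZMod.natCast_eq_natCast_iff', Nat.mod_eq_of_lt (by omega : c < n1)]
  have hinj := injOn_whiteman (n2 := n2) hx1' hx2' j
  rw [hg1, hg2, hlcm, ← coe_range] at hinj
  rw [whitemanD, filter_image,
    card_image_of_injOn (hinj.mono (coe_subset.mpr (filter_subset _ _))), hsize]
  simp only [hres]
  exact Nat.card_filter_range_mul_add_modEq (by omega) _ _ _

theorem whitemanD_mod_n1_uniform
    (n1 n2 : ℕ) (hp1 : n1.Prime) (hp2 : n2.Prime) (hne : n1 ≠ n2)
    (ho1 : Odd n1) (ho2 : Odd n2)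
    (hgcd : Nat.gcd (n1 - 1) (n2 - 1) = 6)
    (g x : ℕ)
    (hg1 : orderOf (g : ZMod n1) = n1 - 1)
    (hg2 : orderOf (g : ZMod n2) = n2 - 1)
    (hx1 : x % n1 = g % n1) (hx2 : x % n2 = 1 % n2) :
    ∀ j ≤ 5, ∀ c, 1 ≤ c → c ≤ n1 - 1 →
      ((whitemanD n1 n2 g x j).filter (fun d => d % n1 = c)).card = (n2 - 1) / 6 :=
  whitemanD_mod_n1_uniform_general n1 n2 hgcd g x hg1 hg2 hx1 hx2
end

section
/- With the Whiteman generalized cyclotomic classes $D_0,\dots,D_5$ of order 6 modulo $n = n_1 n_2$, let $\beta$ be a primitive $n$-th root of unity in a field $K$ of characteristic $p$ with $p \nmid n$. Then for every $0 \le j \le 5$ and every $a \in N_1 = \{n_1, 2n_1, \dots, (n_2-1)n_1\}$, one has $\sum_{i \in D_j} \beta^{a i} = -\frac{n_1-1}{6}$ in $K$ (where the integer $(n_1-1)/6$ is mapped into $K$). -/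
open Finset Polynomial

/-- For a unit of a monoid, powers agree iff the exponents agree mod the order. -/
lemma unit_pow_eq_pow_iff {M : Type*} [Monoid M] {a : M} (h : IsUnit a) {s t : ℕ} :
    a ^ s = a ^ t ↔ s ≡ t [MOD orderOf a] := by
  lift a to Mˣ using h
  rw [← Units.val_pow_eq_pow_val, ← Units.val_pow_eq_pow_val, orderOf_units]
  exact ⟨fun hh => pow_eq_pow_iff_modEq.mp (Units.ext hh),
    fun hh => congrArg Units.val (pow_eq_pow_iff_modEq.mpr hh)⟩

/-- Powers of a primitive root agree on exponents congruent mod the order. -/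
lemma prim_pow_congr {M : Type*} [CommMonoid M] {ζ : M} {m : ℕ}
    (h : IsPrimitiveRoot ζ m) (hm : 0 < m) {s t : ℕ} (hst : s ≡ t [MOD m]) :
    ζ ^ s = ζ ^ t := by
  have hu : IsUnit ζ := IsOfFinOrder.isUnit (isOfFinOrder_iff_pow_eq_one.mpr ⟨m, hm, h.pow_eq_one⟩)
  exact (unit_pow_eq_pow_iff hu).mpr (h.eq_orderOf ▸ hst)

/-- Sum of a `d`-periodic function over `range (c * d)`. -/
lemma sum_periodic_range {M : Type*} [AddCommMonoid M] (F : ℕ → M) (d : ℕ)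
    (hF : ∀ s, F (s + d) = F s) (c : ℕ) :
    ∑ s ∈ Finset.range (c * d), F s = c • ∑ r ∈ Finset.range d, F r := by
  have hshift : ∀ t i, F (t * d + i) = F i := by
    intro t
    induction t with
    | zero => simp
    | succ t ih =>
      intro i
      have : (t + 1) * d + i = (t * d + i) + d := by ring
      rw [this, hF, ih]
  induction c with
  | zero => simp
  | succ c ih =>
    have : (c + 1) * d = c * d + d := by ring
    rw [this, Finset.sum_range_add, ih, succ_nsmul]
    congr 1
    exact Finset.sum_congr rfl fun i _ => hshift c i

theorem sum_class_at_beta_pow_N1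
    (n1 n2 : ℕ) (hp1 : n1.Prime) (hp2 : n2.Prime) (hne : n1 ≠ n2)
    (ho1 : Odd n1) (ho2 : Odd n2)
    (hgcd : Nat.gcd (n1 - 1) (n2 - 1) = 6)
    (g x : ℕ)
    (hg1 : orderOf (g : ZMod n1) = n1 - 1)
    (hg2 : orderOf (g : ZMod n2) = n2 - 1)
    (hx1 : x % n1 = g % n1) (hx2 : x % n2 = 1 % n2)
    (K : Type*) [Field K] (hchar : ¬ (ringChar K ∣ n1 * n2))
    (β : K) (hβ : IsPrimitiveRoot β (n1 * n2)) :
    ∀ j ≤ 5, ∀ a ∈ multSet n1 n2,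
      ∑ i ∈ whitemanD n1 n2 g x j, β ^ (a * i) = -(((n1 - 1) / 6 : ℕ) : K) := by
  intro j hj a ha
  haveI : Fact n2.Prime := ⟨hp2⟩
  have hn1pos : 0 < n1 := hp1.pos
  have hn2pos : 0 < n2 := hp2.pos
  have hn1gt : 1 < n1 := hp1.one_lt
  have hn2gt : 1 < n2 := hp2.one_lt
  have hnpos : 0 < n1 * n2 := Nat.mul_pos hn1pos hn2pos
  have h6a : 6 ∣ n1 - 1 := hgcd ▸ Nat.gcd_dvd_left _ _
  have hd1pos : 0 < n1 - 1 := by omega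
  have hd2pos : 0 < n2 - 1 := by omega
  -- the number of terms
  set c : ℕ := (n1 - 1) / 6 with hc
  have he : (n1 - 1) * (n2 - 1) / 6 = c * (n2 - 1) := by
    obtain ⟨c', hc'⟩ := h6a
    rw [hc, hc', mul_assoc, Nat.mul_div_cancel_left _ (by norm_num : (0:ℕ) < 6),
      Nat.mul_div_cancel_left _ (by norm_num : (0:ℕ) < 6)]
  -- a = k * n1 with 1 ≤ k ≤ n2 - 1
  obtain ⟨k, hk, rfl⟩ := Finset.mem_image.mp ha
  rw [Finset.mem_Icc] at hk
  -- ζ is a primitive n2-th root of unity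
  have hζ : IsPrimitiveRoot (β ^ n1) n2 := hβ.pow hnpos rfl
  set ζ : K := β ^ n1 with hζdef
  -- units mod n1 and n2
  have hgu1 : IsUnit (g : ZMod n1) :=
    IsOfFinOrder.isUnit (orderOf_pos_iff.mp (hg1 ▸ hd1pos))
  have hgu2 : IsUnit (g : ZMod n2) :=
    IsOfFinOrder.isUnit (orderOf_pos_iff.mp (hg2 ▸ hd2pos))
  have hk0 : (k : ZMod n2) ≠ 0 := by
    rw [Ne, ZMod.natCast_eq_zero_iff]
    intro hdvd
    have := Nat.le_of_dvd (by omega) hdvd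
    omega
  have hxg1 : (x : ZMod n1) = (g : ZMod n1) :=
    (ZMod.natCast_eq_natCast_iff _ _ _).mpr hx1
  have hxg2 : (x : ZMod n2) = 1 := by
    have := (ZMod.natCast_eq_natCast_iff x 1 n2).mpr hx2
    simpa using this
  -- injectivity of the defining map of D_j
  have key : ∀ {s t : ℕ}, s ≤ t → t < (n1 - 1) * (n2 - 1) / 6 →
      g ^ s * x ^ j % (n1 * n2) = g ^ t * x ^ j % (n1 * n2) → s = t := by
    intro s t hst ht heq
    have hmod : g ^ s * x ^ j ≡ g ^ t * x ^ j [MOD n1 * n2] := heq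
    have hm1 : (n1 - 1) ∣ t - s := by
      have h1 : ((g ^ s * x ^ j : ℕ) : ZMod n1) = ((g ^ t * x ^ j : ℕ) : ZMod n1) :=
        (ZMod.natCast_eq_natCast_iff _ _ _).mpr (hmod.of_dvd (dvd_mul_right n1 n2))
      push_cast at h1
      rw [hxg1, ← pow_add, ← pow_add] at h1
      have := (unit_pow_eq_pow_iff hgu1).mp h1
      rw [hg1] at this
      have := Nat.ModEq.add_right_cancel' j this
      exact (Nat.modEq_iff_dvd' hst).mp this
    have hm2 : (n2 - 1) ∣ t - s := by
      have h1 : ((g ^ s * x ^ j : ℕ) : ZMod n2) = ((g ^ t * x ^ j : ℕ) : ZMod n2) :=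
        (ZMod.natCast_eq_natCast_iff _ _ _).mpr (hmod.of_dvd (dvd_mul_left n2 n1))
      push_cast at h1
      rw [hxg2, one_pow, mul_one, mul_one] at h1
      have := (unit_pow_eq_pow_iff hgu2).mp h1
      rw [hg2] at this
      exact (Nat.modEq_iff_dvd' hst).mp this
    have hlcm : Nat.lcm (n1 - 1) (n2 - 1) ∣ t - s := Nat.lcm_dvd hm1 hm2
    have hlcm_eq : Nat.lcm (n1 - 1) (n2 - 1) = (n1 - 1) * (n2 - 1) / 6 := by
      rw [Nat.lcm, hgcd]
    rw [hlcm_eq] at hlcm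
    rcases Nat.eq_zero_or_pos (t - s) with h0 | hpos
    · omega
    · have := Nat.le_of_dvd hpos hlcm
      omega
  have hinj : ∀ s ∈ Finset.range ((n1 - 1) * (n2 - 1) / 6),
      ∀ t ∈ Finset.range ((n1 - 1) * (n2 - 1) / 6),
      g ^ s * x ^ j % (n1 * n2) = g ^ t * x ^ j % (n1 * n2) → s = t := by
    intro s hs t ht heq
    rw [Finset.mem_range] at hs ht
    rcases le_total s t with h | h
    · exact key h ht heq
    · exact (key h hs heq.symm).symm
  rw [whitemanD, Finset.sum_image hinj]
  -- rewrite each term as a power of ζ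
  have hterm : ∀ s, β ^ (k * n1 * (g ^ s * x ^ j % (n1 * n2))) = ζ ^ (k * g ^ s) := by
    intro s
    have h1 : k * n1 * (g ^ s * x ^ j % (n1 * n2)) =
        n1 * (k * (g ^ s * x ^ j % (n1 * n2))) := by ring
    rw [h1, pow_mul, ← hζdef]
    apply prim_pow_congr hζ hn2pos
    have hmm : g ^ s * x ^ j % (n1 * n2) ≡ g ^ s * x ^ j [MOD n2] :=
      (Nat.mod_modEq _ _).of_dvd (dvd_mul_left n2 n1)
    have hx2' : x ≡ 1 [MOD n2] := hx2
    have hxj : x ^ j ≡ 1 [MOD n2] := by simpa using hx2'.pow j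
    have : g ^ s * x ^ j ≡ g ^ s [MOD n2] := by
      calc g ^ s * x ^ j ≡ g ^ s * 1 [MOD n2] := (Nat.ModEq.refl _).mul hxj
        _ = g ^ s := mul_one _
    exact (hmm.trans this).mul_left k
  simp only [hterm]
  -- periodicity of s ↦ ζ ^ (k * g ^ s)
  have hper : ∀ s, ζ ^ (k * g ^ (s + (n2 - 1))) = ζ ^ (k * g ^ s) := by
    intro s
    apply prim_pow_congr hζ hn2pos
    have hgd : g ^ (n2 - 1) ≡ 1 [MOD n2] := by
      rw [← ZMod.natCast_eq_natCast_iff]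
      push_cast
      rw [← hg2]
      exact pow_orderOf_eq_one _
    calc k * g ^ (s + (n2 - 1)) = k * g ^ s * g ^ (n2 - 1) := by rw [pow_add]; ring
      _ ≡ k * g ^ s * 1 [MOD n2] := (Nat.ModEq.refl _).mul hgd
      _ = k * g ^ s := mul_one _
  rw [he, sum_periodic_range _ _ hper c]
  -- inner sum equals -1
  have hS : ∑ r ∈ Finset.range (n2 - 1), ζ ^ (k * g ^ r) = -1 := by
    have hinj2 : ∀ s ∈ Finset.range (n2 - 1), ∀ t ∈ Finset.range (n2 - 1),
        k * g ^ s % n2 = k * g ^ t % n2 → s = t := by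
      intro s hs t ht heq
      rw [Finset.mem_range] at hs ht
      have h1 : ((k * g ^ s : ℕ) : ZMod n2) = ((k * g ^ t : ℕ) : ZMod n2) :=
        (ZMod.natCast_eq_natCast_iff _ _ _).mpr heq
      push_cast at h1
      have h2 : (g : ZMod n2) ^ s = (g : ZMod n2) ^ t := mul_left_cancel₀ hk0 h1
      have := (unit_pow_eq_pow_iff hgu2).mp h2
      rw [hg2] at this
      have := Nat.ModEq.eq_of_lt_of_lt this (by omega) (by omega)
      omega
    have himg : (Finset.range (n2 - 1)).image (fun r => k * g ^ r % n2) =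
        Finset.Ico 1 n2 := by
      apply Finset.eq_of_subset_of_card_le
      · intro m hm
        obtain ⟨r, _, rfl⟩ := Finset.mem_image.mp hm
        rw [Finset.mem_Ico]
        refine ⟨?_, Nat.mod_lt _ hn2pos⟩
        by_contra h0
        have h0' : k * g ^ r % n2 = 0 := by omega
        have : ((k * g ^ r : ℕ) : ZMod n2) = 0 := by
          rw [ZMod.natCast_eq_zero_iff]
          exact Nat.dvd_of_mod_eq_zero h0'
        push_cast at this
        rcases mul_eq_zero.mp this with h | h
        · exact hk0 h
        · exact (pow_ne_zero r hgu2.ne_zero) h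
      · rw [Nat.card_Ico, Finset.card_image_of_injOn fun s hs t ht => hinj2 s hs t ht,
          Finset.card_range]
    have hterm2 : ∀ r, ζ ^ (k * g ^ r % n2) = ζ ^ (k * g ^ r) := fun r =>
      prim_pow_congr hζ hn2pos (Nat.mod_modEq _ _)
    have h3 : ∑ r ∈ Finset.range (n2 - 1), ζ ^ (k * g ^ r) =
        ∑ m ∈ Finset.Ico 1 n2, ζ ^ m := by
      rw [← himg, Finset.sum_image hinj2]
      exact Finset.sum_congr rfl fun r _ => (hterm2 r).symm
    have hgeom : ∑ m ∈ Finset.range n2, ζ ^ m = 0 := hζ.geom_sum_eq_zero hn2gt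
    rw [Finset.range_eq_Ico, Finset.sum_eq_sum_Ico_succ_bot hn2pos] at hgeom
    rw [h3]
    simp only [pow_zero, zero_add] at hgeom
    linear_combination hgeom
  rw [hS, nsmul_eq_mul, mul_neg_one]
end

section
/- With the Whiteman generalized cyclotomic classes of order 6 modulo $n = n_1 n_2$, let $\beta$ be a primitive $n$-th root of unity in a field $K$ of characteristic $p$ with $p \nmid n$, and define $S(X) = \sum_{i \in N_1 \cup D_0 \cup D_1 \cup D_2} X^i$. Then for every $a \in N_1 = \{n_1, \dots, (n_2-1)n_1\}$, one has $S(\beta^a) = -\frac{n_1+1}{2}$ in $K$. -/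
open Finset Polynomial

/-- The index set of the generator polynomial `S(x)`: `N1 ∪ D0 ∪ D1 ∪ D2`. -/
def whitemanSIdx (n1 n2 g x : ℕ) : Finset ℕ :=
  multSet n1 n2 ∪ whitemanD n1 n2 g x 0 ∪ whitemanD n1 n2 g x 1 ∪ whitemanD n1 n2 g x 2

/-- If `γ ^ m = 1` then `γ ^ a` depends only on `a` mod `m`. -/
lemma whiteman_pow_congr {M : Type*} [Monoid M] {γ : M} {m : ℕ} (h1 : γ ^ m = 1)
    {a b : ℕ} (hab : a ≡ b [MOD m]) : γ ^ a = γ ^ b := by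
  have key : ∀ t : ℕ, γ ^ t = γ ^ (t % m) := by
    intro t
    conv_lhs => rw [← Nat.div_add_mod t m]
    rw [pow_add, pow_mul, h1, one_pow, one_mul]
  rw [key a, key b]
  exact congrArg (γ ^ ·) (show a % m = b % m from hab)

/-- Cancellation of powers of a nonzero field element. -/
lemma whiteman_pow_cancel {F : Type*} [Field F] {a : F} (ha : a ≠ 0)
    {u v : ℕ} (huv : u ≤ v) (h : a ^ u = a ^ v) : orderOf a ∣ v - u := by
  have h2 : a ^ u * a ^ (v - u) = a ^ u * 1 := by
    rw [← pow_add, Nat.add_sub_cancel' huv, ← h, mul_one]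
  exact orderOf_dvd_of_pow_eq_one (mul_left_cancel₀ (pow_ne_zero _ ha) h2)

/-- Sum of a `p`-periodic function over `range (c * p)`. -/
lemma whiteman_sum_range_mul {M : Type*} [AddCommMonoid M] (f : ℕ → M) (p : ℕ)
    (hf : ∀ s, f (s + p) = f s) (c : ℕ) :
    ∑ s ∈ Finset.range (c * p), f s = c • ∑ s ∈ Finset.range p, f s := by
  induction c with
  | zero => simp
  | succ c ih =>
      have hshift : ∀ d x, f (x + d * p) = f x := by
        intro d
        induction d with
        | zero => simp
        | succ d ih2 =>
            intro x
            have : x + (d + 1) * p = (x + d * p) + p := by ring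
            rw [this, hf, ih2]
      rw [Nat.succ_mul, Finset.sum_range_add, ih, succ_nsmul]
      congr 1
      refine Finset.sum_congr rfl fun y _ => ?_
      rw [Nat.add_comm (c * p) y, hshift c y]

/-- The sum of all nontrivial powers of a primitive `m`-th root of unity is `-1`. -/
lemma whiteman_sum_Icc {K : Type*} [CommRing K] [IsDomain K] {ζ : K} {m : ℕ}
    (hm : 1 < m) (h : IsPrimitiveRoot ζ m) :
    ∑ u ∈ Finset.Icc 1 (m - 1), ζ ^ u = -1 := by
  have h0 := h.geom_sum_eq_zero hm
  have hIcc : Finset.Icc 1 (m - 1) = Finset.Ico 1 m := by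
    rw [← Finset.Ico_add_one_right_eq_Icc]
    congr 1
    omega
  have hsplit : ∑ i ∈ Finset.range m, ζ ^ i
      = ∑ i ∈ Finset.Ico 0 1, ζ ^ i + ∑ i ∈ Finset.Ico 1 m, ζ ^ i := by
    rw [Finset.range_eq_Ico, ← Finset.sum_Ico_consecutive _ (Nat.zero_le 1) (by omega)]
  have h1 : ∑ i ∈ Finset.Ico 0 1, ζ ^ i = 1 := by simp
  rw [hIcc]
  linear_combination h0 - hsplit - h1

theorem S_at_beta_pow_N1
    (n1 n2 : ℕ) (hp1 : n1.Prime) (hp2 : n2.Prime) (hne : n1 ≠ n2)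
    (ho1 : Odd n1) (ho2 : Odd n2)
    (hgcd : Nat.gcd (n1 - 1) (n2 - 1) = 6)
    (g x : ℕ)
    (hg1 : orderOf (g : ZMod n1) = n1 - 1)
    (hg2 : orderOf (g : ZMod n2) = n2 - 1)
    (hx1 : x % n1 = g % n1) (hx2 : x % n2 = 1 % n2)
    (K : Type*) [Field K] (hchar : ¬ (ringChar K ∣ n1 * n2))
    (β : K) (hβ : IsPrimitiveRoot β (n1 * n2)) :
    ∀ a ∈ multSet n1 n2,
      ∑ i ∈ whitemanSIdx n1 n2 g x, (β ^ a) ^ i = -(((n1 + 1) / 2 : ℕ) : K) := by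
  haveI := Fact.mk hp1
  haveI := Fact.mk hp2
  -- basic numerics
  have h6a : 6 ∣ n1 - 1 := hgcd ▸ Nat.gcd_dvd_left _ _
  have h6b : 6 ∣ n2 - 1 := hgcd ▸ Nat.gcd_dvd_right _ _
  have hn1p : 2 ≤ n1 := hp1.two_le
  have hn2p : 2 ≤ n2 := hp2.two_le
  have hn1b : 7 ≤ n1 := by obtain ⟨c, hc⟩ := h6a; omega
  have hn2b : 7 ≤ n2 := by obtain ⟨c, hc⟩ := h6b; omega
  obtain ⟨c, hc⟩ := h6a
  set e := (n1 - 1) * (n2 - 1) / 6 with he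
  have he2 : e = c * (n2 - 1) := by
    rw [he, hc, mul_assoc, Nat.mul_div_cancel_left _ (by norm_num : 0 < 6)]
  -- g is a unit mod n1 and n2
  have hg1ne : (g : ZMod n1) ≠ 0 := by
    intro h0
    have hpow := pow_orderOf_eq_one (g : ZMod n1)
    rw [hg1, h0, zero_pow (by omega : n1 - 1 ≠ 0)] at hpow
    exact zero_ne_one hpow
  have hg2ne : (g : ZMod n2) ≠ 0 := by
    intro h0
    have hpow := pow_orderOf_eq_one (g : ZMod n2)
    rw [hg2, h0, zero_pow (by omega : n2 - 1 ≠ 0)] at hpow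
    exact zero_ne_one hpow
  have hx1' : (x : ZMod n1) = (g : ZMod n1) :=
    (ZMod.natCast_eq_natCast_iff' _ _ _).mpr hx1
  have hx2' : (x : ZMod n2) = 1 := by
    have := (ZMod.natCast_eq_natCast_iff' x 1 n2).mpr hx2
    simpa using this
  -- injectivity of the parametrization of D_i
  have hDinj : ∀ i : ℕ, ∀ s ∈ Finset.range e, ∀ t ∈ Finset.range e,
      g ^ s * x ^ i % (n1 * n2) = g ^ t * x ^ i % (n1 * n2) → s = t := by
    intro i s hs t ht hst
    rw [Finset.mem_range] at hs ht
    have hmod : g ^ s * x ^ i ≡ g ^ t * x ^ i [MOD n1 * n2] := hst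
    have hm1 : g ^ s * x ^ i ≡ g ^ t * x ^ i [MOD n1] := hmod.of_dvd (dvd_mul_right n1 n2)
    have hm2 : g ^ s * x ^ i ≡ g ^ t * x ^ i [MOD n2] := hmod.of_dvd (dvd_mul_left n2 n1)
    have hz1 : (g : ZMod n1) ^ s * (x : ZMod n1) ^ i
        = (g : ZMod n1) ^ t * (x : ZMod n1) ^ i := by
      have := (ZMod.natCast_eq_natCast_iff _ _ _).mpr hm1
      push_cast at this
      exact this
    have hz1' : (g : ZMod n1) ^ s = (g : ZMod n1) ^ t :=
      mul_right_cancel₀ (by rw [hx1']; exact pow_ne_zero _ hg1ne) hz1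
    have hz2 : (g : ZMod n2) ^ s * (x : ZMod n2) ^ i
        = (g : ZMod n2) ^ t * (x : ZMod n2) ^ i := by
      have := (ZMod.natCast_eq_natCast_iff _ _ _).mpr hm2
      push_cast at this
      exact this
    have hz2' : (g : ZMod n2) ^ s = (g : ZMod n2) ^ t := by
      rw [hx2', one_pow, mul_one, mul_one] at hz2
      exact hz2
    have hlcm : Nat.lcm (n1 - 1) (n2 - 1) = e := by
      have h := Nat.gcd_mul_lcm (n1 - 1) (n2 - 1)
      rw [hgcd] at h
      have h' : 6 * Nat.lcm (n1 - 1) (n2 - 1) = 6 * (c * (n2 - 1)) := by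
        rw [h, hc, mul_assoc]
      rw [Nat.eq_of_mul_eq_mul_left (by norm_num : 0 < 6) h', he2]
    rcases le_total s t with hle | hle
    · have d1 := whiteman_pow_cancel hg1ne hle hz1'
      have d2 := whiteman_pow_cancel hg2ne hle hz2'
      rw [hg1] at d1; rw [hg2] at d2
      have := Nat.lcm_dvd d1 d2
      rw [hlcm] at this
      rcases Nat.eq_zero_or_pos (t - s) with h0 | h0
      · omega
      · have := Nat.le_of_dvd h0 this
        omega
    · have d1 := whiteman_pow_cancel hg1ne hle hz1'.symm
      have d2 := whiteman_pow_cancel hg2ne hle hz2'.symm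
      rw [hg1] at d1; rw [hg2] at d2
      have := Nat.lcm_dvd d1 d2
      rw [hlcm] at this
      rcases Nat.eq_zero_or_pos (s - t) with h0 | h0
      · omega
      · have := Nat.le_of_dvd h0 this
        omega
  -- disjointness of N1 and D_i
  have hND : ∀ i : ℕ, Disjoint (multSet n1 n2) (whitemanD n1 n2 g x i) := by
    intro i
    rw [Finset.disjoint_left]
    intro u hu hu'
    simp only [multSet, whitemanD, Finset.mem_image, Finset.mem_Icc,
      Finset.mem_range] at hu hu'
    obtain ⟨k', ⟨hk'1, hk'2⟩, rfl⟩ := hu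
    obtain ⟨s, hs, hgs⟩ := hu'
    have hz : ((g ^ s * x ^ i % (n1 * n2) : ℕ) : ZMod n1) = 0 := by
      rw [hgs]
      push_cast
      rw [ZMod.natCast_self, mul_zero]
    have hmm : g ^ s * x ^ i % (n1 * n2) ≡ g ^ s * x ^ i [MOD n1] :=
      (Nat.mod_modEq _ _).of_dvd (dvd_mul_right n1 n2)
    have hz2 : ((g ^ s * x ^ i % (n1 * n2) : ℕ) : ZMod n1)
        = (g : ZMod n1) ^ s * (g : ZMod n1) ^ i := by
      rw [(ZMod.natCast_eq_natCast_iff _ _ _).mpr hmm]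
      push_cast
      rw [hx1']
    rw [hz2] at hz
    exact mul_ne_zero (pow_ne_zero _ hg1ne) (pow_ne_zero _ hg1ne) hz
  -- disjointness of D_i and D_j
  have hDD : ∀ i j : ℕ, i < j → j < i + 6 →
      Disjoint (whitemanD n1 n2 g x i) (whitemanD n1 n2 g x j) := by
    intro i j hij hij6
    rw [Finset.disjoint_left]
    intro u hui huj
    simp only [whitemanD, Finset.mem_image, Finset.mem_range] at hui huj
    obtain ⟨s, hs, hsu⟩ := hui
    obtain ⟨t, ht, htu⟩ := huj
    have hmod : g ^ s * x ^ i ≡ g ^ t * x ^ j [MOD n1 * n2] := hsu.trans htu.symm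
    have hm1 : g ^ s * x ^ i ≡ g ^ t * x ^ j [MOD n1] := hmod.of_dvd (dvd_mul_right n1 n2)
    have hm2 : g ^ s * x ^ i ≡ g ^ t * x ^ j [MOD n2] := hmod.of_dvd (dvd_mul_left n2 n1)
    have hz1 : (g : ZMod n1) ^ (s + i) = (g : ZMod n1) ^ (t + j) := by
      have := (ZMod.natCast_eq_natCast_iff _ _ _).mpr hm1
      push_cast at this
      rw [hx1'] at this
      rw [pow_add, pow_add]
      exact this
    have hz2 : (g : ZMod n2) ^ s = (g : ZMod n2) ^ t := by
      have := (ZMod.natCast_eq_natCast_iff _ _ _).mpr hm2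
      push_cast at this
      rw [hx2'] at this
      simpa using this
    have H1 : (s + i ≤ t + j ∧ 6 ∣ (t + j) - (s + i)) ∨
        (t + j ≤ s + i ∧ 6 ∣ (s + i) - (t + j)) := by
      rcases le_total (s + i) (t + j) with h | h
      · left
        refine ⟨h, dvd_trans ⟨c, hc⟩ ?_⟩
        have := whiteman_pow_cancel hg1ne h hz1
        rw [hg1] at this
        exact this
      · right
        refine ⟨h, dvd_trans ⟨c, hc⟩ ?_⟩
        have := whiteman_pow_cancel hg1ne h hz1.symm
        rw [hg1] at this
        exact this
    have H2 : (s ≤ t ∧ 6 ∣ t - s) ∨ (t ≤ s ∧ 6 ∣ s - t) := by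
      rcases le_total s t with h | h
      · left
        refine ⟨h, dvd_trans h6b ?_⟩
        have := whiteman_pow_cancel hg2ne h hz2
        rw [hg2] at this
        exact this
      · right
        refine ⟨h, dvd_trans h6b ?_⟩
        have := whiteman_pow_cancel hg2ne h hz2.symm
        rw [hg2] at this
        exact this
    rcases H1 with ⟨h1a, h1b⟩ | ⟨h1a, h1b⟩ <;> rcases H2 with ⟨h2a, h2b⟩ | ⟨h2a, h2b⟩ <;> omega
  -- now fix a ∈ N1
  intro a ha
  simp only [multSet, Finset.mem_image, Finset.mem_Icc] at ha
  obtain ⟨k, ⟨hk1, hk2⟩, rfl⟩ := ha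
  set γ : K := β ^ (k * n1) with hγdef
  have hβn1 : IsPrimitiveRoot (β ^ n1) n2 := hβ.pow (by positivity) rfl
  have hkcop : Nat.Coprime k n2 := by
    apply Nat.Coprime.symm
    refine (hp2.coprime_iff_not_dvd).mpr fun hdvd => ?_
    have := Nat.le_of_dvd (by omega) hdvd
    omega
  have hγ : IsPrimitiveRoot γ n2 := by
    rw [hγdef, mul_comm, pow_mul]
    exact hβn1.pow_of_coprime k hkcop
  have hγ1 : γ ^ n2 = 1 := hγ.pow_eq_one
  have hγmod : ∀ u v : ℕ, u ≡ v [MOD n2] → γ ^ u = γ ^ v :=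
    fun u v h => whiteman_pow_congr hγ1 h
  -- sum over N1
  have hsumN : ∑ i ∈ multSet n1 n2, γ ^ i = -1 := by
    rw [multSet, Finset.sum_image (fun y _ z _ h =>
      Nat.eq_of_mul_eq_mul_right (by omega : 0 < n1) h)]
    have hδ : IsPrimitiveRoot (γ ^ n1) n2 :=
      hγ.pow_of_coprime n1 ((Nat.coprime_primes hp1 hp2).mpr hne)
    calc ∑ k' ∈ Finset.Icc 1 (n2 - 1), γ ^ (k' * n1)
        = ∑ k' ∈ Finset.Icc 1 (n2 - 1), (γ ^ n1) ^ k' := by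
          refine Finset.sum_congr rfl fun k' _ => ?_
          rw [mul_comm k' n1, pow_mul]
      _ = -1 := whiteman_sum_Icc (by omega) hδ
  -- sum over each D_i
  have hsumD : ∀ i : ℕ, ∑ u ∈ whitemanD n1 n2 g x i, γ ^ u = c • (-1 : K) := by
    intro i
    rw [whitemanD, Finset.sum_image (hDinj i)]
    have hterm : ∀ s : ℕ, γ ^ (g ^ s * x ^ i % (n1 * n2)) = γ ^ (g ^ s) := by
      intro s
      apply hγmod
      calc g ^ s * x ^ i % (n1 * n2) ≡ g ^ s * x ^ i [MOD n2] :=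
            (Nat.mod_modEq _ _).of_dvd (dvd_mul_left n2 n1)
        _ ≡ g ^ s * 1 ^ i [MOD n2] := Nat.ModEq.mul_left _ ((show x ≡ 1 [MOD n2] from hx2).pow i)
        _ = g ^ s := by rw [one_pow, mul_one]
    rw [Finset.sum_congr rfl fun s _ => hterm s]
    have hper : ∀ s : ℕ, (fun s => γ ^ g ^ s) (s + (n2 - 1)) = (fun s => γ ^ g ^ s) s := by
      intro s
      apply hγmod
      have hone : g ^ (n2 - 1) ≡ 1 [MOD n2] := by
        have hp := pow_orderOf_eq_one (g : ZMod n2)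
        rw [hg2] at hp
        have : ((g ^ (n2 - 1) : ℕ) : ZMod n2) = ((1 : ℕ) : ZMod n2) := by
          push_cast
          exact hp
        exact (ZMod.natCast_eq_natCast_iff _ _ _).mp this
      calc g ^ (s + (n2 - 1)) = g ^ s * g ^ (n2 - 1) := pow_add g s (n2 - 1)
        _ ≡ g ^ s * 1 [MOD n2] := Nat.ModEq.mul_left _ hone
        _ = g ^ s := mul_one _
    rw [show Finset.range e = Finset.range (c * (n2 - 1)) by rw [he2],
      whiteman_sum_range_mul (fun s => γ ^ g ^ s) (n2 - 1) hper c]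
    congr 1
    -- base sum over one period
    have hinj2 : ∀ r ∈ Finset.range (n2 - 1), ∀ r' ∈ Finset.range (n2 - 1),
        g ^ r % n2 = g ^ r' % n2 → r = r' := by
      intro r hr r' hr' hrr
      rw [Finset.mem_range] at hr hr'
      have hz : (g : ZMod n2) ^ r = (g : ZMod n2) ^ r' := by
        have := (ZMod.natCast_eq_natCast_iff _ _ _).mpr (show g ^ r ≡ g ^ r' [MOD n2] from hrr)
        push_cast at this
        exact this
      rcases le_total r r' with h | h
      · have := whiteman_pow_cancel hg2ne h hz
        rw [hg2] at this
        rcases Nat.eq_zero_or_pos (r' - r) with h0 | h0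
        · omega
        · have := Nat.le_of_dvd h0 this; omega
      · have := whiteman_pow_cancel hg2ne h hz.symm
        rw [hg2] at this
        rcases Nat.eq_zero_or_pos (r - r') with h0 | h0
        · omega
        · have := Nat.le_of_dvd h0 this; omega
    have hT : (Finset.range (n2 - 1)).image (fun r => g ^ r % n2)
        = Finset.Icc 1 (n2 - 1) := by
      apply Finset.eq_of_subset_of_card_le
      · intro u hu
        simp only [Finset.mem_image, Finset.mem_range] at hu
        obtain ⟨r, hr, rfl⟩ := hu
        have hlt : g ^ r % n2 < n2 := Nat.mod_lt _ (by omega)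
        have hne0 : g ^ r % n2 ≠ 0 := by
          intro h0
          have : ((g ^ r : ℕ) : ZMod n2) = 0 := by
            rw [ZMod.natCast_eq_zero_iff]
            exact Nat.dvd_of_mod_eq_zero h0
          push_cast at this
          exact pow_ne_zero _ hg2ne this
        rw [Finset.mem_Icc]
        omega
      · rw [Nat.card_Icc, Finset.card_image_of_injOn
          (fun r hr r' hr' h => hinj2 r (by simpa using hr) r' (by simpa using hr') h),
          Finset.card_range]
        omega
    calc ∑ s ∈ Finset.range (n2 - 1), γ ^ g ^ s
        = ∑ s ∈ Finset.range (n2 - 1), γ ^ (g ^ s % n2) := by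
          refine Finset.sum_congr rfl fun s _ => ?_
          exact hγmod _ _ (Nat.mod_modEq _ _).symm
      _ = ∑ u ∈ (Finset.range (n2 - 1)).image (fun r => g ^ r % n2), γ ^ u :=
          (Finset.sum_image hinj2).symm
      _ = ∑ u ∈ Finset.Icc 1 (n2 - 1), γ ^ u := by rw [hT]
      _ = -1 := whiteman_sum_Icc (by omega) hγ
  -- assemble
  have hdisj1 : Disjoint (multSet n1 n2 ∪ whitemanD n1 n2 g x 0 ∪ whitemanD n1 n2 g x 1)
      (whitemanD n1 n2 g x 2) := by
    rw [Finset.disjoint_union_left, Finset.disjoint_union_left]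
    exact ⟨⟨hND 2, hDD 0 2 (by norm_num) (by norm_num)⟩, hDD 1 2 (by norm_num) (by norm_num)⟩
  have hdisj2 : Disjoint (multSet n1 n2 ∪ whitemanD n1 n2 g x 0) (whitemanD n1 n2 g x 1) := by
    rw [Finset.disjoint_union_left]
    exact ⟨hND 1, hDD 0 1 (by norm_num) (by norm_num)⟩
  have hdisj3 : Disjoint (multSet n1 n2) (whitemanD n1 n2 g x 0) := hND 0
  rw [whitemanSIdx, Finset.sum_union hdisj1, Finset.sum_union hdisj2,
    Finset.sum_union hdisj3, hsumN, hsumD 0, hsumD 1, hsumD 2]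
  have hhalf : (n1 + 1) / 2 = 3 * c + 1 := by omega
  rw [hhalf]
  push_cast [nsmul_eq_mul]
  ring
end

section
/- With the Whiteman generalized cyclotomic classes of order 6 modulo $n = n_1 n_2$, let $\beta$ be a primitive $n$-th root of unity in a field $K$ of characteristic $p$ with $p \nmid n$, and define $S(X) = \sum_{i \in N_1 \cup D_0 \cup D_1 \cup D_2} X^i$. Then for every $a \in N_2 = \{n_2, \dots, (n_1-1)n_2\}$, one has $S(\beta^a) = \frac{n_2-1}{2}$ in $K$. -/
/-! `ζ = β ^ a` with `a ∈ N₂` satisfies `ζ ^ n₁ = 1` and `ζ ≠ 1`, so `ζ ^ d` depends only on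
`d mod n₁`, and every element of `N₁` contributes `1`. Modulo `n₁` the element `g ^ s * x ^ i` of
`D_i` is `g ^ (s + i)`; the index range of `D_i` has length
`lcm (n₁ - 1) (n₂ - 1) = (n₁ - 1)(n₂ - 1) / 6`, so `g ^ (s + i) mod n₁` runs `(n₂ - 1) / 6` times
through the nonzero residues, whose `ζ`-powers sum to `-1`. Hence
`S(ζ) = (n₂ - 1) - 3 (n₂ - 1) / 6 = (n₂ - 1) / 2`. The union is disjoint because
`g ^ s x ^ i ≡ g ^ t x ^ j (mod n)` forces `s + i ≡ t + j (mod n₁ - 1)` and `s ≡ t (mod n₂ - 1)`,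
hence `i ≡ j (mod 6)`. -/

open Finset Polynomial

theorem Function.Periodic.sum_range_mul {M : Type*} [AddCommMonoid M] {f : ℕ → M} {d : ℕ}
    (hf : Function.Periodic f d) (m : ℕ) :
    ∑ s ∈ range (d * m), f s = m • ∑ s ∈ range d, f s := by
  induction m with
  | zero => simp
  | succ m ih =>
    rw [Nat.mul_succ, sum_range_add, ih, succ_nsmul]
    congr 1
    refine sum_congr rfl fun s _ => ?_
    rw [add_comm, mul_comm]
    simpa using hf.nat_mul m s

theorem geom_sum_Ico_one_eq_neg_one {K : Type*} [DivisionRing K] {ζ : K} {q : ℕ} (hq : 0 < q)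
    (hζq : ζ ^ q = 1) (hζ : ζ ≠ 1) : ∑ u ∈ Ico 1 q, ζ ^ u = -1 := by
  rw [sum_Ico_eq_sub _ hq, geom_sum_eq hζ, hζq]
  simp

theorem Nat.pow_modEq_pow_iff_of_orderOf_eq {q g o : ℕ} (hg : orderOf (g : ZMod q) = o)
    (ho : 0 < o) {s t : ℕ} : g ^ s ≡ g ^ t [MOD q] ↔ s ≡ t [MOD o] := by
  rw [← ZMod.natCast_eq_natCast_iff, Nat.cast_pow, Nat.cast_pow, ← hg]
  exact (orderOf_pos_iff.mp (hg ▸ ho)).pow_eq_pow_iff_modEq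

theorem Nat.not_dvd_pow_of_orderOf_pos {q g : ℕ} (hq : q ≠ 1) (hg : 0 < orderOf (g : ZMod q))
    (k : ℕ) : ¬ q ∣ g ^ k := fun hdvd =>
  hq (Nat.Coprime.eq_one_of_dvd
    (((ZMod.isUnit_iff_coprime g q).mp (orderOf_pos_iff.mp hg).isUnit).pow_left k).symm hdvd)

theorem injOn_pow_add_mod {q g : ℕ} (hg : orderOf (g : ZMod q) = q - 1) (i : ℕ) :
    Set.InjOn (fun s => g ^ (s + i) % q) (range (q - 1)) := by
  intro s hs t ht hst
  simp only [coe_range, Set.mem_Iio] at hs ht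
  have hst' : s + i ≡ t + i [MOD q - 1] :=
    (Nat.pow_modEq_pow_iff_of_orderOf_eq hg (by omega)).mp hst
  exact (Nat.ModEq.add_right_cancel' i hst').eq_of_lt_of_lt hs ht

theorem image_pow_add_mod_range {q g : ℕ} (hg : orderOf (g : ZMod q) = q - 1) (i : ℕ) :
    (range (q - 1)).image (fun s => g ^ (s + i) % q) = Ico 1 q := by
  refine eq_of_subset_of_card_le (fun u hu => ?_) ?_
  · obtain ⟨s, hs, rfl⟩ := mem_image.mp hu
    have hq : 1 < q := by have := mem_range.mp hs; omega
    have hndvd := Nat.not_dvd_pow_of_orderOf_pos hq.ne' (by rw [hg]; omega) (s + i)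
    simp only [mem_Ico]
    exact ⟨Nat.pos_of_ne_zero fun h => hndvd (Nat.dvd_of_mod_eq_zero h), Nat.mod_lt _ (by omega)⟩
  · rw [card_image_of_injOn (injOn_pow_add_mod hg i), Nat.card_Ico, card_range]

theorem sum_pow_pow_add_range {K : Type*} [DivisionRing K] {ζ : K} {q g : ℕ} (hq : 0 < q)
    (hζq : ζ ^ q = 1) (hζ : ζ ≠ 1) (hg : orderOf (g : ZMod q) = q - 1) (i : ℕ) :
    ∑ s ∈ range (q - 1), ζ ^ g ^ (s + i) = -1 := by
  calc ∑ s ∈ range (q - 1), ζ ^ g ^ (s + i)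
      = ∑ s ∈ range (q - 1), ζ ^ (g ^ (s + i) % q) :=
        sum_congr rfl fun s _ => pow_eq_pow_mod _ hζq
    _ = ∑ u ∈ Ico 1 q, ζ ^ u := by
        rw [← image_pow_add_mod_range hg i, sum_image (injOn_pow_add_mod hg i)]
    _ = -1 := geom_sum_Ico_one_eq_neg_one hq hζq hζ

theorem Nat.pow_mul_pow_modEq_pow_add {q g x : ℕ} (hx : x ≡ g [MOD q]) (s i : ℕ) :
    g ^ s * x ^ i ≡ g ^ (s + i) [MOD q] := by
  rw [pow_add]
  exact (hx.pow i).mul_left _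

theorem Nat.pow_mul_pow_modEq_pow {q g x : ℕ} (hx : x ≡ 1 [MOD q]) (s i : ℕ) :
    g ^ s * x ^ i ≡ g ^ s [MOD q] := by
  simpa using (hx.pow i).mul_left (g ^ s)

theorem sum_multSet_pow {R : Type*} [Semiring R] {ζ : R} {a : ℕ} (ha : 0 < a) (hζ : ζ ^ a = 1)
    (b : ℕ) : ∑ d ∈ multSet a b, ζ ^ d = ((b - 1 : ℕ) : R) := by
  rw [multSet, sum_image fun k _ l _ h => Nat.eq_of_mul_eq_mul_right ha h]
  simp [pow_mul', hζ]

section Whiteman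

variable {n1 n2 g x : ℕ}

theorem modEq_of_pow_mul_pow_mod_eq (hn1 : 1 < n1) (hn2 : 1 < n2)
    (hg1 : orderOf (g : ZMod n1) = n1 - 1) (hg2 : orderOf (g : ZMod n2) = n2 - 1)
    (hx1 : x ≡ g [MOD n1]) (hx2 : x ≡ 1 [MOD n2]) {s t i j : ℕ}
    (h : g ^ s * x ^ i % (n1 * n2) = g ^ t * x ^ j % (n1 * n2)) :
    s + i ≡ t + j [MOD n1 - 1] ∧ s ≡ t [MOD n2 - 1] := by
  have h' : g ^ s * x ^ i ≡ g ^ t * x ^ j [MOD n1 * n2] := h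
  constructor
  · refine (Nat.pow_modEq_pow_iff_of_orderOf_eq hg1 (by omega)).mp ?_
    exact (Nat.pow_mul_pow_modEq_pow_add hx1 s i).symm.trans
      ((h'.of_mul_right n2).trans (Nat.pow_mul_pow_modEq_pow_add hx1 t j))
  · refine (Nat.pow_modEq_pow_iff_of_orderOf_eq hg2 (by omega)).mp ?_
    exact (Nat.pow_mul_pow_modEq_pow hx2 s i).symm.trans
      ((h'.of_mul_left n1).trans (Nat.pow_mul_pow_modEq_pow hx2 t j))

theorem disjoint_whitemanD (hn1 : 1 < n1) (hn2 : 1 < n2) (hgcd : Nat.gcd (n1 - 1) (n2 - 1) = 6)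
    (hg1 : orderOf (g : ZMod n1) = n1 - 1) (hg2 : orderOf (g : ZMod n2) = n2 - 1)
    (hx1 : x ≡ g [MOD n1]) (hx2 : x ≡ 1 [MOD n2]) {i j : ℕ} (hi : i < 6) (hj : j < 6)
    (hij : i ≠ j) : Disjoint (whitemanD n1 n2 g x i) (whitemanD n1 n2 g x j) := by
  simp only [whitemanD, disjoint_left, mem_image, not_exists, not_and]
  rintro _ ⟨s, -, rfl⟩ t - hts
  obtain ⟨h1, h2⟩ := modEq_of_pow_mul_pow_mod_eq hn1 hn2 hg1 hg2 hx1 hx2 hts.symm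
  have h1' : s + i ≡ t + j [MOD 6] := h1.of_dvd (hgcd ▸ Nat.gcd_dvd_left _ _)
  have h2' : s ≡ t [MOD 6] := h2.of_dvd (hgcd ▸ Nat.gcd_dvd_right _ _)
  exact hij ((Nat.ModEq.add_left_cancel h2' h1').eq_of_lt_of_lt hi hj)

theorem injOn_whitemanD (hn1 : 1 < n1) (hn2 : 1 < n2) (hgcd : Nat.gcd (n1 - 1) (n2 - 1) = 6)
    (hg1 : orderOf (g : ZMod n1) = n1 - 1) (hg2 : orderOf (g : ZMod n2) = n2 - 1)
    (hx1 : x ≡ g [MOD n1]) (hx2 : x ≡ 1 [MOD n2]) (i : ℕ) :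
    Set.InjOn (fun s => g ^ s * x ^ i % (n1 * n2)) (range ((n1 - 1) * (n2 - 1) / 6)) := by
  intro s hs t ht hst
  simp only [coe_range, Set.mem_Iio] at hs ht
  obtain ⟨h1, h2⟩ := modEq_of_pow_mul_pow_mod_eq hn1 hn2 hg1 hg2 hx1 hx2 hst
  have hL : (n1 - 1) * (n2 - 1) / 6 = Nat.lcm (n1 - 1) (n2 - 1) := by rw [Nat.lcm, hgcd]
  have hst' : s ≡ t [MOD (n1 - 1) * (n2 - 1) / 6] :=
    hL ▸ Nat.mod_lcm (Nat.ModEq.add_right_cancel' i h1) h2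
  exact hst'.eq_of_lt_of_lt hs ht

theorem not_dvd_of_mem_whitemanD (hn1 : 1 < n1) (hg1 : orderOf (g : ZMod n1) = n1 - 1)
    (hx1 : x ≡ g [MOD n1]) {i d : ℕ} (hd : d ∈ whitemanD n1 n2 g x i) : ¬ n1 ∣ d := by
  obtain ⟨s, -, rfl⟩ := mem_image.mp hd
  have hmod : g ^ s * x ^ i % (n1 * n2) ≡ g ^ (s + i) [MOD n1] :=
    ((Nat.mod_modEq _ _).of_mul_right n2).trans (Nat.pow_mul_pow_modEq_pow_add hx1 s i)
  exact fun hdvd => Nat.not_dvd_pow_of_orderOf_pos hn1.ne' (by rw [hg1]; omega) (s + i)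
    (Nat.modEq_zero_iff_dvd.mp (hmod.symm.trans (Nat.modEq_zero_iff_dvd.mpr hdvd)))

theorem disjoint_multSet_whitemanD (hn1 : 1 < n1) (hg1 : orderOf (g : ZMod n1) = n1 - 1)
    (hx1 : x ≡ g [MOD n1]) (i : ℕ) : Disjoint (multSet n1 n2) (whitemanD n1 n2 g x i) := by
  rw [disjoint_right]
  intro d hd hmult
  obtain ⟨k, -, rfl⟩ := mem_image.mp hmult
  exact not_dvd_of_mem_whitemanD hn1 hg1 hx1 hd (dvd_mul_left n1 k)

theorem sum_whitemanD_pow {K : Type*} [DivisionRing K] {ζ : K} (hn1 : 1 < n1) (hn2 : 1 < n2)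
    (hgcd : Nat.gcd (n1 - 1) (n2 - 1) = 6)
    (hg1 : orderOf (g : ZMod n1) = n1 - 1) (hg2 : orderOf (g : ZMod n2) = n2 - 1)
    (hx1 : x ≡ g [MOD n1]) (hx2 : x ≡ 1 [MOD n2]) (hζn1 : ζ ^ n1 = 1) (hζ : ζ ≠ 1) (i : ℕ) :
    ∑ d ∈ whitemanD n1 n2 g x i, ζ ^ d = -(((n2 - 1) / 6 : ℕ) : K) := by
  obtain ⟨m, hm⟩ : 6 ∣ n2 - 1 := hgcd ▸ Nat.gcd_dvd_right _ _
  have hL : (n1 - 1) * (n2 - 1) / 6 = (n1 - 1) * m := by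
    rw [hm, mul_left_comm, Nat.mul_div_cancel_left _ (by norm_num)]
  have hper : Function.Periodic (fun s => ζ ^ g ^ (s + i)) (n1 - 1) := fun s =>
    pow_eq_pow_of_modEq ((Nat.pow_modEq_pow_iff_of_orderOf_eq hg1 (by omega)).mpr
      (by rw [add_right_comm]; exact Nat.add_modulus_modEq_iff.mpr rfl)) hζn1
  rw [whitemanD, sum_image (injOn_whitemanD hn1 hn2 hgcd hg1 hg2 hx1 hx2 i), hL]
  calc ∑ s ∈ range ((n1 - 1) * m), ζ ^ (g ^ s * x ^ i % (n1 * n2))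
      = ∑ s ∈ range ((n1 - 1) * m), ζ ^ g ^ (s + i) := sum_congr rfl fun s _ =>
        pow_eq_pow_of_modEq (((Nat.mod_modEq _ _).of_mul_right n2).trans
          (Nat.pow_mul_pow_modEq_pow_add hx1 s i)) hζn1
    _ = m • (-1) := by
        rw [hper.sum_range_mul, sum_pow_pow_add_range (by omega) hζn1 hζ hg1 i]
    _ = -(((n2 - 1) / 6 : ℕ) : K) := by simp [hm]

theorem sum_whitemanSIdx_pow {K : Type*} [DivisionRing K] {ζ : K} (hn1 : 1 < n1) (hn2 : 1 < n2)
    (hgcd : Nat.gcd (n1 - 1) (n2 - 1) = 6)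
    (hg1 : orderOf (g : ZMod n1) = n1 - 1) (hg2 : orderOf (g : ZMod n2) = n2 - 1)
    (hx1 : x ≡ g [MOD n1]) (hx2 : x ≡ 1 [MOD n2]) (hζn1 : ζ ^ n1 = 1) (hζ : ζ ≠ 1) :
    ∑ d ∈ whitemanSIdx n1 n2 g x, ζ ^ d = (((n2 - 1) / 2 : ℕ) : K) := by
  have hDD {i j : ℕ} (hij : i < j := by norm_num) (hj : j < 6 := by norm_num) :=
    disjoint_whitemanD hn1 hn2 hgcd hg1 hg2 hx1 hx2 (hij.trans hj) hj hij.ne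
  have hND := disjoint_multSet_whitemanD (n2 := n2) hn1 hg1 hx1
  have hsumD := sum_whitemanD_pow (K := K) hn1 hn2 hgcd hg1 hg2 hx1 hx2 hζn1 hζ
  rw [whitemanSIdx,
    sum_union (disjoint_union_left.mpr ⟨disjoint_union_left.mpr ⟨hND 2, hDD⟩, hDD⟩),
    sum_union (disjoint_union_left.mpr ⟨hND 1, hDD⟩), sum_union (hND 0),
    sum_multSet_pow (by omega) hζn1, hsumD, hsumD, hsumD]
  obtain ⟨m, hm⟩ : 6 ∣ n2 - 1 := hgcd ▸ Nat.gcd_dvd_right _ _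
  rw [hm, show 6 * m / 2 = 3 * m by omega, show 6 * m / 6 = m by omega]
  push_cast
  noncomm_ring

end Whiteman

theorem S_at_beta_pow_N2_general
    (n1 n2 : ℕ) (hp2 : n2.Prime)
    (hgcd : Nat.gcd (n1 - 1) (n2 - 1) = 6)
    (g x : ℕ)
    (hg1 : orderOf (g : ZMod n1) = n1 - 1)
    (hg2 : orderOf (g : ZMod n2) = n2 - 1)
    (hx1 : x % n1 = g % n1) (hx2 : x % n2 = 1 % n2)
    (K : Type*) [Field K]
    (β : K) (hβ : IsPrimitiveRoot β (n1 * n2)) :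
    ∀ a ∈ multSet n2 n1,
      ∑ i ∈ whitemanSIdx n1 n2 g x, (β ^ a) ^ i = (((n2 - 1) / 2 : ℕ) : K) := by
  intro a ha
  obtain ⟨k, hk, rfl⟩ := mem_image.mp ha
  obtain ⟨hk1, hkn1⟩ := mem_Icc.mp hk
  refine sum_whitemanSIdx_pow (by omega) hp2.one_lt hgcd hg1 hg2 hx1 hx2 ?_ ?_
  · rw [← pow_mul, hβ.pow_eq_one_iff_dvd]
    exact ⟨k, by ring⟩
  · exact hβ.pow_ne_one_of_pos_of_lt (Nat.mul_pos (by omega) hp2.pos).ne'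
      (Nat.mul_lt_mul_of_pos_right (by omega) hp2.pos)

theorem S_at_beta_pow_N2
    (n1 n2 : ℕ) (hp1 : n1.Prime) (hp2 : n2.Prime) (hne : n1 ≠ n2)
    (ho1 : Odd n1) (ho2 : Odd n2)
    (hgcd : Nat.gcd (n1 - 1) (n2 - 1) = 6)
    (g x : ℕ)
    (hg1 : orderOf (g : ZMod n1) = n1 - 1)
    (hg2 : orderOf (g : ZMod n2) = n2 - 1)
    (hx1 : x % n1 = g % n1) (hx2 : x % n2 = 1 % n2)
    (K : Type*) [Field K] (hchar : ¬ (ringChar K ∣ n1 * n2))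
    (β : K) (hβ : IsPrimitiveRoot β (n1 * n2)) :
    ∀ a ∈ multSet n2 n1,
      ∑ i ∈ whitemanSIdx n1 n2 g x, (β ^ a) ^ i = (((n2 - 1) / 2 : ℕ) : K) :=
  S_at_beta_pow_N2_general n1 n2 hp2 hgcd g x hg1 hg2 hx1 hx2 K β hβ
end

section
/- With the Whiteman generalized cyclotomic classes of order 6 modulo $n = n_1 n_2$ and $\beta$ a primitive $n$-th root of unity in a field $K$ with $\mathrm{char}(K) \nmid n$, define $S(X) = \sum_{i \in N_1 \cup D_0 \cup D_1 \cup D_2} X^i$ and $T(X) = \sum_{i \in N_1 \cup D_1 \cup D_2 \cup D_3} X^i$. Then for every $a \in D_1$, $S(\beta^a) = T(\beta)$. -/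
open Finset Polynomial

/-- The index set of the polynomial `T(x)`: `N1 ∪ D1 ∪ D2 ∪ D3`. -/
def whitemanTIdx (n1 n2 g x : ℕ) : Finset ℕ :=
  multSet n1 n2 ∪ whitemanD n1 n2 g x 1 ∪ whitemanD n1 n2 g x 2 ∪ whitemanD n1 n2 g x 3

private lemma shiftImage (m t : ℕ) :
    (Finset.range m).image (fun s => (s + t) % m) = Finset.range m := by
  rcases Nat.eq_zero_or_pos m with hm | hm
  · subst hm; simp
  · apply Finset.eq_of_subset_of_card_le
    · intro u hu
      simp only [Finset.mem_image, Finset.mem_range] at *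
      obtain ⟨s, _, rfl⟩ := hu
      exact Nat.mod_lt _ hm
    · rw [Finset.card_image_of_injOn]
      intro s hs s' hs' h
      simp only [Finset.coe_range, Set.mem_Iio] at hs hs'
      have h2 := Nat.ModEq.add_right_cancel' t (h : (s + t) ≡ (s' + t) [MOD m])
      rwa [Nat.ModEq, Nat.mod_eq_of_lt hs, Nat.mod_eq_of_lt hs'] at h2

private lemma pow_mod_cycle {g m n : ℕ} (h : g ^ m ≡ 1 [MOD n]) (c : ℕ) :
    g ^ c ≡ g ^ (c % m) [MOD n] := by
  conv_lhs => rw [← Nat.div_add_mod c m]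
  rw [pow_add, pow_mul]
  calc (g ^ m) ^ (c / m) * g ^ (c % m)
      ≡ 1 ^ (c / m) * g ^ (c % m) [MOD n] := (h.pow _).mul_right _
    _ = g ^ (c % m) := by rw [one_pow, one_mul]

private lemma D_image (n1 n2 g x t j : ℕ)
    (hcyc : g ^ ((n1 - 1) * (n2 - 1) / 6) ≡ 1 [MOD n1 * n2]) :
    (whitemanD n1 n2 g x j).image (fun i => (g ^ t * x % (n1 * n2)) * i % (n1 * n2))
      = whitemanD n1 n2 g x (j + 1) := by
  unfold whitemanD
  rw [Finset.image_image]
  have key : ∀ s : ℕ, (g ^ t * x % (n1 * n2)) * (g ^ s * x ^ j % (n1 * n2)) % (n1 * n2)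
      = g ^ ((s + t) % ((n1 - 1) * (n2 - 1) / 6)) * x ^ (j + 1) % (n1 * n2) := by
    intro s
    have h1 : (g ^ t * x % (n1 * n2)) * (g ^ s * x ^ j % (n1 * n2)) % (n1 * n2)
        = (g ^ t * x) * (g ^ s * x ^ j) % (n1 * n2) := (Nat.mul_mod _ _ _).symm
    have h2 : (g ^ t * x) * (g ^ s * x ^ j) = g ^ (s + t) * x ^ (j + 1) := by
      rw [pow_add, pow_succ]; ring
    have h3 : g ^ (s + t) * x ^ (j + 1) % (n1 * n2)
        = g ^ ((s + t) % ((n1 - 1) * (n2 - 1) / 6)) * x ^ (j + 1) % (n1 * n2) :=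
      (pow_mod_cycle hcyc (s + t)).mul_right _
    rw [h1, h2, h3]
  calc (Finset.range ((n1 - 1) * (n2 - 1) / 6)).image
        ((fun i => (g ^ t * x % (n1 * n2)) * i % (n1 * n2)) ∘ fun s => g ^ s * x ^ j % (n1 * n2))
      = (Finset.range ((n1 - 1) * (n2 - 1) / 6)).image
        ((fun u => g ^ u * x ^ (j + 1) % (n1 * n2)) ∘ fun s => (s + t) % ((n1 - 1) * (n2 - 1) / 6)) :=
        Finset.image_congr (fun s _ => key s)
    _ = ((Finset.range ((n1 - 1) * (n2 - 1) / 6)).image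
          (fun s => (s + t) % ((n1 - 1) * (n2 - 1) / 6))).image
          (fun u => g ^ u * x ^ (j + 1) % (n1 * n2)) := Finset.image_image.symm
    _ = (Finset.range ((n1 - 1) * (n2 - 1) / 6)).image
          (fun u => g ^ u * x ^ (j + 1) % (n1 * n2)) := by rw [shiftImage]

private lemma mult_image (n1 n2 a : ℕ) (hp2 : n2.Prime) (ha : Nat.Coprime a n2) :
    (multSet n1 n2).image (fun i => a * i % (n1 * n2)) = multSet n1 n2 := by
  have hn2 : 1 < n2 := hp2.one_lt
  unfold multSet
  rw [Finset.image_image]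
  have himg : (Finset.Icc 1 (n2 - 1)).image (fun k => a * k % n2) = Finset.Icc 1 (n2 - 1) := by
    apply Finset.eq_of_subset_of_card_le
    · intro u hu
      simp only [Finset.mem_image, Finset.mem_Icc] at *
      obtain ⟨k, ⟨hk1, hk2⟩, rfl⟩ := hu
      have hlt : a * k % n2 < n2 := Nat.mod_lt _ (by omega)
      have hne : a * k % n2 ≠ 0 := by
        intro h0
        rcases hp2.dvd_mul.mp (Nat.dvd_of_mod_eq_zero h0) with h' | h'
        · exact (hp2.coprime_iff_not_dvd.mp ha.symm) h'
        · have := Nat.le_of_dvd (by omega) h'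
          omega
      omega
    · rw [Finset.card_image_of_injOn]
      intro k hk k' hk' h
      simp only [Finset.coe_Icc, Set.mem_Icc] at hk hk'
      have h2 : k ≡ k' [MOD n2] :=
        Nat.ModEq.cancel_left_of_coprime (by rw [Nat.gcd_comm]; exact ha)
          (h : a * k ≡ a * k' [MOD n2])
      rwa [Nat.ModEq, Nat.mod_eq_of_lt (by omega), Nat.mod_eq_of_lt (by omega)] at h2
  calc (Finset.Icc 1 (n2 - 1)).image ((fun i => a * i % (n1 * n2)) ∘ fun k => k * n1)
      = (Finset.Icc 1 (n2 - 1)).image ((fun k => k * n1) ∘ fun k => a * k % n2) := by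
        apply Finset.image_congr
        intro k _
        simp only [Function.comp]
        rw [show a * (k * n1) = n1 * (a * k) by ring, Nat.mul_mod_mul_left, mul_comm]
    _ = ((Finset.Icc 1 (n2 - 1)).image (fun k => a * k % n2)).image (fun k => k * n1) :=
        Finset.image_image.symm
    _ = (Finset.Icc 1 (n2 - 1)).image (fun k => k * n1) := by rw [himg]

theorem S_at_beta_pow_D1
    (n1 n2 : ℕ) (hp1 : n1.Prime) (hp2 : n2.Prime) (hne : n1 ≠ n2)
    (ho1 : Odd n1) (ho2 : Odd n2)
    (hgcd : Nat.gcd (n1 - 1) (n2 - 1) = 6)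
    (g x : ℕ)
    (hg1 : orderOf (g : ZMod n1) = n1 - 1)
    (hg2 : orderOf (g : ZMod n2) = n2 - 1)
    (hx1 : x % n1 = g % n1) (hx2 : x % n2 = 1 % n2)
    (K : Type*) [Field K] (hchar : ¬ (ringChar K ∣ n1 * n2))
    (β : K) (hβ : IsPrimitiveRoot β (n1 * n2)) :
    ∀ a ∈ whitemanD n1 n2 g x 1,
      ∑ i ∈ whitemanSIdx n1 n2 g x, (β ^ a) ^ i = ∑ i ∈ whitemanTIdx n1 n2 g x, β ^ i := by
  intro a ha
  have hn1 : 1 < n1 := hp1.one_lt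
  have hn2 : 1 < n2 := hp2.one_lt
  haveI : NeZero n1 := ⟨by omega⟩
  haveI : NeZero n2 := ⟨by omega⟩
  have hnpos : 0 < n1 * n2 := by positivity
  -- coprimality of g with n1, n2
  have hgu1 : IsUnit (g : ZMod n1) :=
    IsUnit.of_pow_eq_one (pow_orderOf_eq_one _) (by rw [hg1]; omega)
  have hgu2 : IsUnit (g : ZMod n2) :=
    IsUnit.of_pow_eq_one (pow_orderOf_eq_one _) (by rw [hg2]; omega)
  have hcg1 : Nat.Coprime g n1 := (ZMod.isUnit_iff_coprime g n1).mp hgu1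
  have hcg2 : Nat.Coprime g n2 := (ZMod.isUnit_iff_coprime g n2).mp hgu2
  -- coprimality of x with n1, n2
  have hxg1 : (x : ZMod n1) = (g : ZMod n1) := (ZMod.natCast_eq_natCast_iff' _ _ _).mpr hx1
  have hcx1 : Nat.Coprime x n1 := (ZMod.isUnit_iff_coprime x n1).mp (hxg1 ▸ hgu1)
  have hcx2 : Nat.Coprime x n2 := by
    have hx2' : (x : ZMod n2) = ((1 : ℕ) : ZMod n2) := (ZMod.natCast_eq_natCast_iff' _ _ _).mpr hx2
    refine (ZMod.isUnit_iff_coprime x n2).mp ?_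
    rw [hx2', Nat.cast_one]
    exact isUnit_one
  -- g ^ (ni - 1) ≡ 1 mod ni
  have hgc : ∀ (p : ℕ) (_ : 1 < p) (hu : orderOf (g : ZMod p) = p - 1), g ^ (p - 1) ≡ 1 [MOD p] := by
    intro p hps hu
    have h1 := pow_orderOf_eq_one (g : ZMod p)
    rw [hu] at h1
    have h2 : ((g ^ (p - 1) : ℕ) : ZMod p) = ((1 : ℕ) : ZMod p) := by push_cast; simpa using h1
    exact (ZMod.natCast_eq_natCast_iff _ _ _).mp h2
  -- the cycle length m
  have hmlcm : (n1 - 1) * (n2 - 1) / 6 = Nat.lcm (n1 - 1) (n2 - 1) := by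
    rw [Nat.lcm, hgcd]
  have pow_one_of_dvd : ∀ (p e d : ℕ), g ^ e ≡ 1 [MOD p] → e ∣ d → g ^ d ≡ 1 [MOD p] := by
    rintro p e d he ⟨c, rfl⟩
    rw [pow_mul]
    simpa using he.pow c
  have hcop : Nat.Coprime n1 n2 := (Nat.coprime_primes hp1 hp2).mpr hne
  have hcyc : g ^ ((n1 - 1) * (n2 - 1) / 6) ≡ 1 [MOD n1 * n2] := by
    refine (Nat.modEq_and_modEq_iff_modEq_mul hcop).mp ⟨?_, ?_⟩
    · exact pow_one_of_dvd n1 (n1 - 1) _ (hgc n1 hn1 hg1) (hmlcm ▸ Nat.dvd_lcm_left _ _)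
    · exact pow_one_of_dvd n2 (n2 - 1) _ (hgc n2 hn2 hg2) (hmlcm ▸ Nat.dvd_lcm_right _ _)
  -- structure of a
  rw [whitemanD, Finset.mem_image] at ha
  obtain ⟨t, ht, hat⟩ := ha
  have ha' : a = g ^ t * x % (n1 * n2) := by rw [← hat, pow_one]
  -- coprimality of a with n = n1 * n2
  have hca : Nat.Coprime a (n1 * n2) := by
    have h1 : Nat.Coprime (g ^ t * x) n1 := Nat.Coprime.mul (hcg1.pow_left t) hcx1
    have h2 : Nat.Coprime (g ^ t * x) n2 := Nat.Coprime.mul (hcg2.pow_left t) hcx2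
    have h3 : Nat.Coprime (g ^ t * x) (n1 * n2) := h1.mul_right h2
    rw [ha']
    show Nat.gcd (g ^ t * x % (n1 * n2)) (n1 * n2) = 1
    rw [← Nat.gcd_rec, Nat.gcd_comm]
    exact h3
  have hca2 : Nat.Coprime a n2 := Nat.Coprime.coprime_dvd_right (Dvd.intro_left n1 rfl) hca
  -- every element of the S index set is < n
  have hSlt : ∀ i ∈ whitemanSIdx n1 n2 g x, i < n1 * n2 := by
    intro i hi
    simp only [whitemanSIdx, multSet, whitemanD, Finset.mem_union, Finset.mem_image,
      Finset.mem_Icc, Finset.mem_range] at hi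
    rcases hi with ((hi | hi) | hi) | hi
    · obtain ⟨k, ⟨hk1, hk2⟩, rfl⟩ := hi
      calc k * n1 ≤ (n2 - 1) * n1 := Nat.mul_le_mul_right _ hk2
        _ < n2 * n1 := Nat.mul_lt_mul_of_lt_of_le (by omega) (le_refl n1) (by omega)
        _ = n1 * n2 := mul_comm _ _
    · obtain ⟨s, _, rfl⟩ := hi; exact Nat.mod_lt _ hnpos
    · obtain ⟨s, _, rfl⟩ := hi; exact Nat.mod_lt _ hnpos
    · obtain ⟨s, _, rfl⟩ := hi; exact Nat.mod_lt _ hnpos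
  -- injectivity of multiplication by a on the S index set
  have hinj : ∀ i ∈ whitemanSIdx n1 n2 g x, ∀ j ∈ whitemanSIdx n1 n2 g x,
      a * i % (n1 * n2) = a * j % (n1 * n2) → i = j := by
    intro i hi j hj h
    have h2 : i ≡ j [MOD n1 * n2] :=
      Nat.ModEq.cancel_left_of_coprime (by rw [Nat.gcd_comm]; exact hca)
        (h : a * i ≡ a * j [MOD n1 * n2])
    rwa [Nat.ModEq, Nat.mod_eq_of_lt (hSlt i hi), Nat.mod_eq_of_lt (hSlt j hj)] at h2
  -- the image identity
  have himage : (whitemanSIdx n1 n2 g x).image (fun i => a * i % (n1 * n2))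
      = whitemanTIdx n1 n2 g x := by
    have hDj : ∀ j : ℕ, (whitemanD n1 n2 g x j).image (fun i => a * i % (n1 * n2))
        = whitemanD n1 n2 g x (j + 1) := by
      intro j
      rw [ha']
      exact D_image n1 n2 g x t j hcyc
    rw [whitemanSIdx, whitemanTIdx, Finset.image_union, Finset.image_union, Finset.image_union,
      mult_image n1 n2 a hp2 hca2, hDj 0, hDj 1, hDj 2]
  -- reducing powers of β mod n
  have hβpow : ∀ c : ℕ, β ^ c = β ^ (c % (n1 * n2)) := by
    intro c
    conv_lhs => rw [← Nat.div_add_mod c (n1 * n2)]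
    rw [pow_add, pow_mul, hβ.pow_eq_one, one_pow, one_mul]
  calc ∑ i ∈ whitemanSIdx n1 n2 g x, (β ^ a) ^ i
      = ∑ i ∈ whitemanSIdx n1 n2 g x, β ^ (a * i % (n1 * n2)) := by
        refine Finset.sum_congr rfl fun i _ => ?_
        rw [← pow_mul, hβpow]
    _ = ∑ j ∈ (whitemanSIdx n1 n2 g x).image (fun i => a * i % (n1 * n2)), β ^ j :=
        (Finset.sum_image hinj).symm
    _ = ∑ i ∈ whitemanTIdx n1 n2 g x, β ^ i := by rw [himage]
end

section
/- With the Whiteman generalized cyclotomic classes of order 6 modulo $n = n_1 n_2$ and $\beta$ a primitive $n$-th root of unity in a field $K$ with $\mathrm{char}(K) \nmid n$, define $S(X) = \sum_{i \in N_1 \cup D_0 \cup D_1 \cup D_2} X^i$. Then for every $a \in D_3$, $S(\beta^a) = -(S(\beta) + 1)$. -/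
open Finset Polynomial

/-! Write `T_j = ∑_{i ∈ D_j} β^i`. Multiplication by `a = g^r x^3 ∈ D₃` maps `D_j` onto `D_{j+3}`
for `j < 3` (the exponent of `g` only matters modulo `(n₁-1)(n₂-1)/6`, the order of `g` mod `n`),
while the `N₁`-part of `S` sums to `-1` at every primitive `n`-th root. The classes `D₀, …, D₅`
are disjoint, of equal size and consist of units mod `n`, so by counting they partition the units;
hence `T₀ + ⋯ + T₅` is the Ramanujan sum `μ(n₁n₂) = 1`, and
`S(β^a) = -1 + T₃ + T₄ + T₅ = -(T₀ + T₁ + T₂) = -(S(β) + 1)`. -/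

theorem Function.Periodic.sum_range_add {M : Type*} [AddCommMonoid M] {f : ℕ → M} {e : ℕ}
    (hf : Function.Periodic f e) (r : ℕ) :
    ∑ s ∈ range e, f (r + s) = ∑ s ∈ range e, f s := by
  induction r with
  | zero => simp
  | succ r ih =>
    rcases e with _ | e
    · simp
    rw [← ih, sum_range_succ, sum_range_succ', add_zero, ← hf r]
    congr 1
    · exact sum_congr rfl fun s _ => by rw [add_assoc, add_comm 1 s]
    · rw [add_assoc, add_comm 1 e]

theorem IsPrimitiveRoot.pow_eq_pow_of_modEq {M : Type*} [CommMonoid M] {ζ : M} {k a b : ℕ}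
    (hζ : IsPrimitiveRoot ζ k) (h : a ≡ b [MOD k]) : ζ ^ a = ζ ^ b := by
  rw [pow_eq_pow_mod a hζ.pow_eq_one, h, ← pow_eq_pow_mod b hζ.pow_eq_one]

theorem IsPrimitiveRoot.sum_range_filter_dvd_pow {K : Type*} [CommRing K] [IsDomain K] {ζ : K}
    {m k : ℕ} (hζ : IsPrimitiveRoot ζ (m * k)) (hk : 1 < k) :
    ∑ i ∈ range (m * k) with m ∣ i, ζ ^ i = 0 := by
  rcases m.eq_zero_or_pos with rfl | hm
  · simp
  have hmul : {i ∈ range (m * k) | m ∣ i} = (range k).image (m * ·) := by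
    ext i
    simp only [mem_filter, mem_range, mem_image]
    constructor
    · rintro ⟨hi, c, rfl⟩
      exact ⟨c, Nat.lt_of_mul_lt_mul_left hi, rfl⟩
    · rintro ⟨c, hc, rfl⟩
      exact ⟨Nat.mul_lt_mul_of_pos_left hc hm, dvd_mul_right m c⟩
  rw [hmul, sum_image fun a _ b _ h => Nat.eq_of_mul_eq_mul_left hm h]
  simp_rw [pow_mul]
  exact (hζ.pow (by positivity) rfl).geom_sum_eq_zero hk

theorem IsPrimitiveRoot.sum_range_filter_coprime_pow {K : Type*} [CommRing K] [IsDomain K]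
    {ζ : K} {p q : ℕ} (hp : p.Prime) (hq : q.Prime) (hpq : p ≠ q)
    (hζ : IsPrimitiveRoot ζ (p * q)) :
    ∑ i ∈ range (p * q) with (p * q).Coprime i, ζ ^ i = 1 := by
  have hcop : ∀ i, (p * q).Coprime i ↔ ¬(p ∣ i ∨ q ∣ i) := fun i => by
    rw [Nat.coprime_mul_iff_left, hp.coprime_iff_not_dvd, hq.coprime_iff_not_dvd, not_or]
  have hboth : {i ∈ range (p * q) | p ∣ i} ∩ {i ∈ range (p * q) | q ∣ i} = {0} := by
    ext i
    simp only [mem_inter, mem_filter, mem_range, mem_singleton]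
    constructor
    · rintro ⟨⟨hi, hpi⟩, -, hqi⟩
      exact Nat.eq_zero_of_dvd_of_lt
        (((Nat.coprime_primes hp hq).mpr hpq).mul_dvd_of_dvd_of_dvd hpi hqi) hi
    · rintro rfl
      have : 0 < p * q := Nat.mul_pos hp.pos hq.pos
      simp [this]
  have hsum_p := hζ.sum_range_filter_dvd_pow hq.one_lt
  have hsum_q := (mul_comm p q ▸ hζ).sum_range_filter_dvd_pow hp.one_lt
  rw [mul_comm q p] at hsum_q
  have hunion := sum_union_inter (s₁ := {i ∈ range (p * q) | p ∣ i})
    (s₂ := {i ∈ range (p * q) | q ∣ i}) (f := (ζ ^ ·))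
  rw [← filter_or, hboth, sum_singleton, pow_zero, hsum_p, hsum_q] at hunion
  have htotal := sum_filter_add_sum_filter_not (range (p * q)) (fun i => p ∣ i ∨ q ∣ i) (ζ ^ ·)
  rw [hζ.geom_sum_eq_zero (Nat.one_lt_mul_iff.mpr ⟨hp.pos, hq.pos, Or.inl hp.one_lt⟩)] at htotal
  simp_rw [hcop]
  linear_combination htotal - hunion

theorem IsPrimitiveRoot.sum_multSet_pow {K : Type*} [CommRing K] [IsDomain K] {ζ : K} {m k : ℕ}
    (hζ : IsPrimitiveRoot ζ (m * k)) (hm : 0 < m) (hk : 1 < k) :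
    ∑ i ∈ multSet m k, ζ ^ i = -1 := by
  have hgeom := (hζ.pow (Nat.mul_pos hm (by omega)) rfl).geom_sum_eq_zero hk
  rw [range_eq_Ico, sum_eq_sum_Ico_succ_bot (by omega), pow_zero, zero_add,
    show k = k - 1 + 1 by omega, Finset.Ico_add_one_right_eq_Icc] at hgeom
  rw [multSet, sum_image fun a _ b _ h => Nat.eq_of_mul_eq_mul_right hm h]
  simp_rw [mul_comm _ m, pow_mul]
  linear_combination hgeom

theorem eq_and_eq_of_pow_mul_pow_modEq {n1 n2 g x s t i j : ℕ}
    (hx1 : x ≡ g [MOD n1]) (hx2 : x ≡ 1 [MOD n2])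
    (hs : s < Nat.lcm (orderOf (g : ZMod n1)) (orderOf (g : ZMod n2)))
    (ht : t < Nat.lcm (orderOf (g : ZMod n1)) (orderOf (g : ZMod n2)))
    (hi : i < Nat.gcd (orderOf (g : ZMod n1)) (orderOf (g : ZMod n2)))
    (hj : j < Nat.gcd (orderOf (g : ZMod n1)) (orderOf (g : ZMod n2)))
    (h : g ^ s * x ^ i ≡ g ^ t * x ^ j [MOD n1 * n2]) : s = t ∧ i = j := by
  have hord : orderOf (g : ZMod n1) ≠ 0 ∧ orderOf (g : ZMod n2) ≠ 0 := by
    rw [← not_or, ← Nat.lcm_eq_zero_iff]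
    exact (Nat.zero_lt_of_lt hs).ne'
  have hx1' : (x : ZMod n1) = g := (ZMod.natCast_eq_natCast_iff _ _ _).mpr hx1
  have hx2' : (x : ZMod n2) = 1 := by
    simpa using (ZMod.natCast_eq_natCast_iff _ _ _).mpr hx2
  have h1 : s + i ≡ t + j [MOD orderOf (g : ZMod n1)] := by
    rw [← (orderOf_ne_zero_iff.mp hord.1).pow_eq_pow_iff_modEq, pow_add, pow_add]
    have := (ZMod.natCast_eq_natCast_iff _ _ _).mpr (h.of_mul_right n2)
    push_cast [hx1'] at this
    exact this
  have h2 : s ≡ t [MOD orderOf (g : ZMod n2)] := by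
    rw [← (orderOf_ne_zero_iff.mp hord.2).pow_eq_pow_iff_modEq]
    have := (ZMod.natCast_eq_natCast_iff _ _ _).mpr (h.of_mul_left n1)
    push_cast [hx2', one_pow, mul_one] at this
    exact this
  have hij : i = j :=
    ((h2.of_dvd (Nat.gcd_dvd_right _ _)).add_left_cancel
      (h1.of_dvd (Nat.gcd_dvd_left _ _))).eq_of_lt_of_lt hi hj
  subst hij
  exact ⟨(Nat.mod_lcm (h1.add_right_cancel' i) h2).eq_of_lt_of_lt hs ht, rfl⟩

theorem pow_lcm_orderOf_modEq_one {n1 n2 g : ℕ} (hco : n1.Coprime n2) :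
    g ^ Nat.lcm (orderOf (g : ZMod n1)) (orderOf (g : ZMod n2)) ≡ 1 [MOD n1 * n2] := by
  refine (Nat.modEq_and_modEq_iff_modEq_mul hco).mp ⟨?_, ?_⟩ <;>
    rw [← ZMod.natCast_eq_natCast_iff] <;> push_cast <;> rw [← orderOf_dvd_iff_pow_eq_one]
  exacts [Nat.dvd_lcm_left _ _, Nat.dvd_lcm_right _ _]

structure IsWhitemanGenerator (n1 n2 g x : ℕ) : Prop where
  prime_left : n1.Prime
  prime_right : n2.Prime
  ne : n1 ≠ n2
  gcd_eq : Nat.gcd (n1 - 1) (n2 - 1) = 6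
  orderOf_left : orderOf (g : ZMod n1) = n1 - 1
  orderOf_right : orderOf (g : ZMod n2) = n2 - 1
  modEq_left : x ≡ g [MOD n1]
  modEq_right : x ≡ 1 [MOD n2]

namespace IsWhitemanGenerator

variable {n1 n2 g x : ℕ}

theorem coprime (hW : IsWhitemanGenerator n1 n2 g x) : n1.Coprime n2 :=
  (Nat.coprime_primes hW.prime_left hW.prime_right).mpr hW.ne

theorem lcm_orderOf (hW : IsWhitemanGenerator n1 n2 g x) :
    Nat.lcm (orderOf (g : ZMod n1)) (orderOf (g : ZMod n2)) = (n1 - 1) * (n2 - 1) / 6 := by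
  rw [hW.orderOf_left, hW.orderOf_right, Nat.lcm, hW.gcd_eq]

theorem eq_and_eq_of_modEq (hW : IsWhitemanGenerator n1 n2 g x) {s t i j : ℕ}
    (hs : s < (n1 - 1) * (n2 - 1) / 6) (ht : t < (n1 - 1) * (n2 - 1) / 6) (hi : i < 6) (hj : j < 6)
    (h : g ^ s * x ^ i ≡ g ^ t * x ^ j [MOD n1 * n2]) : s = t ∧ i = j := by
  rw [← hW.lcm_orderOf] at hs ht
  rw [← hW.gcd_eq, ← hW.orderOf_left, ← hW.orderOf_right] at hi hj
  exact eq_and_eq_of_pow_mul_pow_modEq hW.modEq_left hW.modEq_right hs ht hi hj h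

theorem pow_modEq_one (hW : IsWhitemanGenerator n1 n2 g x) :
    g ^ ((n1 - 1) * (n2 - 1) / 6) ≡ 1 [MOD n1 * n2] :=
  hW.lcm_orderOf ▸ pow_lcm_orderOf_modEq_one hW.coprime

theorem coprime_pow_mul_pow (hW : IsWhitemanGenerator n1 n2 g x) (s i : ℕ) :
    (g ^ s * x ^ i).Coprime (n1 * n2) := by
  have hg : ∀ {m : ℕ}, m.Prime → orderOf (g : ZMod m) = m - 1 → g.Coprime m := fun hm hord =>
    (ZMod.isUnit_iff_coprime g _).mp
      (orderOf_ne_zero_iff.mp (by rw [hord]; have := hm.two_le; omega)).isUnit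
  have hg1 := hg hW.prime_left hW.orderOf_left
  have hg2 := hg hW.prime_right hW.orderOf_right
  have hx1 : x.Coprime n1 := hW.modEq_left.gcd_eq.trans hg1
  have hx2 : x.Coprime n2 := hW.modEq_right.gcd_eq.trans (Nat.gcd_one_left n2)
  exact ((hg1.mul_right hg2).pow_left s).mul_left ((hx1.mul_right hx2).pow_left i)

theorem whitemanD_subset (hW : IsWhitemanGenerator n1 n2 g x) (j : ℕ) :
    whitemanD n1 n2 g x j ⊆ {i ∈ range (n1 * n2) | (n1 * n2).Coprime i} := by
  intro d hd
  obtain ⟨s, -, rfl⟩ := mem_image.mp hd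
  rw [mem_filter, mem_range]
  exact ⟨Nat.mod_lt _ (Nat.mul_pos hW.prime_left.pos hW.prime_right.pos),
    ((ZMod.coprime_mod_iff_coprime _ _).mpr (hW.coprime_pow_mul_pow s j)).symm⟩

theorem injOn_whitemanD (hW : IsWhitemanGenerator n1 n2 g x) {j : ℕ} (hj : j < 6) :
    Set.InjOn (fun s => g ^ s * x ^ j % (n1 * n2)) (range ((n1 - 1) * (n2 - 1) / 6)) :=
  fun _ hs _ ht h => (hW.eq_and_eq_of_modEq (mem_range.mp hs) (mem_range.mp ht) hj hj h).1

theorem card_whitemanD (hW : IsWhitemanGenerator n1 n2 g x) {j : ℕ} (hj : j < 6) :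
    #(whitemanD n1 n2 g x j) = (n1 - 1) * (n2 - 1) / 6 := by
  rw [whitemanD, card_image_of_injOn (hW.injOn_whitemanD hj), card_range]

theorem pairwiseDisjoint_whitemanD (hW : IsWhitemanGenerator n1 n2 g x) :
    (range 6 : Set ℕ).PairwiseDisjoint (whitemanD n1 n2 g x) := by
  intro i hi j hj hij
  rw [Function.onFun, disjoint_left]
  intro d hdi hdj
  obtain ⟨s, hs, rfl⟩ := mem_image.mp hdi
  obtain ⟨t, ht, hts⟩ := mem_image.mp hdj
  exact hij (hW.eq_and_eq_of_modEq (mem_range.mp hs) (mem_range.mp ht)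
    (mem_range.mp hi) (mem_range.mp hj) hts.symm).2

theorem biUnion_whitemanD (hW : IsWhitemanGenerator n1 n2 g x) :
    (range 6).biUnion (whitemanD n1 n2 g x) = {i ∈ range (n1 * n2) | (n1 * n2).Coprime i} := by
  refine eq_of_subset_of_card_le (biUnion_subset.mpr fun j _ => hW.whitemanD_subset j) ?_
  have h6 : 6 ∣ (n1 - 1) * (n2 - 1) :=
    dvd_mul_of_dvd_left (hW.gcd_eq ▸ Nat.gcd_dvd_left _ _) _
  rw [card_biUnion hW.pairwiseDisjoint_whitemanD,
    sum_congr rfl fun j hj => hW.card_whitemanD (mem_range.mp hj), sum_const, card_range,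
    smul_eq_mul, Nat.mul_div_cancel' h6, ← Nat.totient, Nat.totient_mul hW.coprime,
    Nat.totient_prime hW.prime_left, Nat.totient_prime hW.prime_right]

theorem sum_whitemanD {K : Type*} [CommSemiring K] {ζ : K} (hW : IsWhitemanGenerator n1 n2 g x)
    (hζ : IsPrimitiveRoot ζ (n1 * n2)) {j : ℕ} (hj : j < 6) :
    ∑ i ∈ whitemanD n1 n2 g x j, ζ ^ i
      = ∑ s ∈ range ((n1 - 1) * (n2 - 1) / 6), ζ ^ (g ^ s * x ^ j) := by
  rw [whitemanD, sum_image (hW.injOn_whitemanD hj)]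
  exact sum_congr rfl fun s _ => hζ.pow_eq_pow_of_modEq (Nat.mod_modEq _ _)

theorem sum_whitemanD_pow {K : Type*} [CommSemiring K] {ζ : K} (hW : IsWhitemanGenerator n1 n2 g x)
    (hζ : IsPrimitiveRoot ζ (n1 * n2)) {a r k j : ℕ} (ha : a ≡ g ^ r * x ^ k [MOD n1 * n2])
    (hkj : k + j < 6) :
    ∑ i ∈ whitemanD n1 n2 g x j, (ζ ^ a) ^ i = ∑ i ∈ whitemanD n1 n2 g x (k + j), ζ ^ i := by
  have hperiodic : Function.Periodic (fun s => ζ ^ (g ^ s * x ^ (k + j)))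
      ((n1 - 1) * (n2 - 1) / 6) := fun s => hζ.pow_eq_pow_of_modEq <| by
    simpa only [pow_add, mul_one] using
      (Nat.ModEq.mul_left (g ^ s) hW.pow_modEq_one).mul_right (x ^ (k + j))
  rw [hW.sum_whitemanD hζ hkj, whitemanD, sum_image (hW.injOn_whitemanD (by omega)),
    ← hperiodic.sum_range_add r]
  refine sum_congr rfl fun s _ => ?_
  rw [← pow_mul]
  refine hζ.pow_eq_pow_of_modEq ?_
  calc a * (g ^ s * x ^ j % (n1 * n2))
      ≡ g ^ r * x ^ k * (g ^ s * x ^ j) [MOD n1 * n2] := ha.mul (Nat.mod_modEq _ _)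
    _ = g ^ (r + s) * x ^ (k + j) := by ring

theorem sum_range_six_sum_whitemanD {K : Type*} [CommRing K] [IsDomain K] {ζ : K}
    (hW : IsWhitemanGenerator n1 n2 g x) (hζ : IsPrimitiveRoot ζ (n1 * n2)) :
    ∑ j ∈ range 6, ∑ i ∈ whitemanD n1 n2 g x j, ζ ^ i = 1 := by
  rw [← sum_biUnion hW.pairwiseDisjoint_whitemanD, hW.biUnion_whitemanD]
  exact hζ.sum_range_filter_coprime_pow hW.prime_left hW.prime_right hW.ne

theorem disjoint_multSet_whitemanD (hW : IsWhitemanGenerator n1 n2 g x) (j : ℕ) :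
    Disjoint (multSet n1 n2) (whitemanD n1 n2 g x j) := by
  rw [disjoint_left]
  intro d hd hdD
  obtain ⟨c, -, rfl⟩ := mem_image.mp hd
  have hcop := (Nat.coprime_mul_iff_left.mp (mem_filter.mp (hW.whitemanD_subset j hdD)).2).1
  exact hW.prime_left.one_lt.ne' (hcop.eq_one_of_dvd (dvd_mul_left n1 c))

theorem sum_whitemanSIdx {K : Type*} [CommRing K] [IsDomain K] {ζ : K}
    (hW : IsWhitemanGenerator n1 n2 g x) (hζ : IsPrimitiveRoot ζ (n1 * n2)) :
    ∑ i ∈ whitemanSIdx n1 n2 g x, ζ ^ i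
      = -1 + ∑ j ∈ range 3, ∑ i ∈ whitemanD n1 n2 g x j, ζ ^ i := by
  have hS : whitemanSIdx n1 n2 g x = multSet n1 n2 ∪ (range 3).biUnion (whitemanD n1 n2 g x) := by
    ext d
    simp [whitemanSIdx, range_add_one, or_assoc, or_comm]
  rw [hS, sum_union ((disjoint_biUnion_right _ _ _).mpr fun j _ => hW.disjoint_multSet_whitemanD j),
    sum_biUnion (hW.pairwiseDisjoint_whitemanD.subset (by simp)),
    hζ.sum_multSet_pow hW.prime_left.pos hW.prime_right.one_lt]

end IsWhitemanGenerator

theorem S_at_beta_pow_D3_general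
    (n1 n2 : ℕ) (hp1 : n1.Prime) (hp2 : n2.Prime) (hne : n1 ≠ n2)
    (hgcd : Nat.gcd (n1 - 1) (n2 - 1) = 6)
    (g x : ℕ)
    (hg1 : orderOf (g : ZMod n1) = n1 - 1)
    (hg2 : orderOf (g : ZMod n2) = n2 - 1)
    (hx1 : x % n1 = g % n1) (hx2 : x % n2 = 1 % n2)
    (K : Type*) [Field K]
    (β : K) (hβ : IsPrimitiveRoot β (n1 * n2)) :
    ∀ a ∈ whitemanD n1 n2 g x 3,
      ∑ i ∈ whitemanSIdx n1 n2 g x, (β ^ a) ^ i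
        = -((∑ i ∈ whitemanSIdx n1 n2 g x, β ^ i) + 1) := by
  intro a ha
  have hW : IsWhitemanGenerator n1 n2 g x := ⟨hp1, hp2, hne, hgcd, hg1, hg2, hx1, hx2⟩
  have hβa : IsPrimitiveRoot (β ^ a) (n1 * n2) :=
    hβ.pow_of_coprime a (mem_filter.mp (hW.whitemanD_subset 3 ha)).2.symm
  obtain ⟨r, -, rfl⟩ := mem_image.mp ha
  have hunits := hW.sum_range_six_sum_whitemanD hβ
  rw [show 6 = 3 + 3 from rfl, sum_range_add] at hunits
  rw [hW.sum_whitemanSIdx hβa, hW.sum_whitemanSIdx hβ, sum_congr rfl fun j hj =>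
    hW.sum_whitemanD_pow hβ (Nat.mod_modEq _ _) (by have := mem_range.mp hj; omega)]
  linear_combination hunits

theorem S_at_beta_pow_D3
    (n1 n2 : ℕ) (hp1 : n1.Prime) (hp2 : n2.Prime) (hne : n1 ≠ n2)
    (ho1 : Odd n1) (ho2 : Odd n2)
    (hgcd : Nat.gcd (n1 - 1) (n2 - 1) = 6)
    (g x : ℕ)
    (hg1 : orderOf (g : ZMod n1) = n1 - 1)
    (hg2 : orderOf (g : ZMod n2) = n2 - 1)
    (hx1 : x % n1 = g % n1) (hx2 : x % n2 = 1 % n2)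
    (K : Type*) [Field K] (hchar : ¬ (ringChar K ∣ n1 * n2))
    (β : K) (hβ : IsPrimitiveRoot β (n1 * n2)) :
    ∀ a ∈ whitemanD n1 n2 g x 3,
      ∑ i ∈ whitemanSIdx n1 n2 g x, (β ^ a) ^ i
        = -((∑ i ∈ whitemanSIdx n1 n2 g x, β ^ i) + 1) :=
  S_at_beta_pow_D3_general n1 n2 hp1 hp2 hne hgcd g x hg1 hg2 hx1 hx2 K β hβ
end

section
/- Let $q$ be a prime power with $\gcd(q, n) = 1$, where $n = n_1 n_2$ as in the Whiteman generalized cyclotomy of order 6, and suppose $q \bmod n \in D_1 \cup D_3 \cup D_5$. Let $\beta$ be a primitive $n$-th root of unity in an extension of $\mathrm{GF}(q)$ and $S(X) = \sum_{i \in N_1 \cup D_0 \cup D_1 \cup D_2} X^i$. Then $S(\beta)$ satisfies $S(\beta)^{q^3} + S(\beta) + 1 = 0$, and consequently $S(\beta) \notin \{0, -1\}$. -/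
open Finset Polynomial

theorem Finset.image_eq_of_image_subset_of_image_subset {α : Type*} [DecidableEq α]
    {f : α → α} (hf : Function.Injective f) {s t : Finset α}
    (hst : s.image f ⊆ t) (hts : t.image f ⊆ s) : s.image f = t :=
  eq_of_subset_of_card_le hst <| by
    rw [card_image_of_injective _ hf]
    exact (card_image_of_injective _ hf).symm.le.trans (card_le_card hts)

theorem pow_eq_pow_iff_modEq_of_orderOf_eq {M : Type*} [Monoid M] {g : M} {k a b : ℕ}
    (hg : orderOf g = k) (hk : k ≠ 0) : g ^ a = g ^ b ↔ a ≡ b [MOD k] := by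
  rw [IsOfFinOrder.pow_eq_pow_iff_modEq (orderOf_pos_iff.mp (hg ▸ Nat.pos_of_ne_zero hk)), hg]

theorem FiniteField.sum_pow_card_pow (F : Type*) [Field F] [Fintype F] {K : Type*} [CommRing K]
    [Nontrivial K] [Algebra F K] {ι : Type*} (s : Finset ι) (f : ι → K) (k : ℕ) :
    (∑ i ∈ s, f i) ^ Fintype.card F ^ k = ∑ i ∈ s, f i ^ Fintype.card F ^ k := by
  obtain ⟨m, hp, hcard⟩ := FiniteField.card F (ringChar F)
  have : Fact (ringChar F).Prime := ⟨hp⟩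
  have : CharP K (ringChar F) := charP_of_injective_algebraMap' F _
  rw [hcard, ← pow_mul]
  exact sum_pow_char_pow _ _ s f

namespace ZMod

theorem eq_of_castHom_eq {m n : ℕ} (hmn : m.Coprime n) {z w : ZMod (m * n)}
    (hm : castHom (dvd_mul_right m n) (ZMod m) z = castHom (dvd_mul_right m n) (ZMod m) w)
    (hn : castHom (dvd_mul_left n m) (ZMod n) z = castHom (dvd_mul_left n m) (ZMod n) w) :
    z = w :=
  (chineseRemainder hmn).injective <| Prod.ext
    (by simpa [chineseRemainder] using hm)
    (by simpa [chineseRemainder] using hn)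

theorem exists_pow_eq_of_orderOf_eq {p : ℕ} [Fact p.Prime] {g : ZMod p} (hg : orderOf g = p - 1)
    {w : ZMod p} (hw : w ≠ 0) : ∃ u, g ^ u = w := by
  have : NeZero (p - 1) := ⟨by have := (Fact.out : p.Prime).two_le; omega⟩
  obtain ⟨u, -, hu⟩ := (hg ▸ IsPrimitiveRoot.orderOf g).eq_pow_of_pow_eq_one
    (pow_card_sub_one_eq_one hw)
  exact ⟨u, hu⟩

theorem isUnit_iff_not_dvd_val {p₁ p₂ : ℕ} (hp₁ : p₁.Prime) (hp₂ : p₂.Prime)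
    [NeZero (p₁ * p₂)] (z : ZMod (p₁ * p₂)) :
    IsUnit z ↔ ¬p₁ ∣ z.val ∧ ¬p₂ ∣ z.val := by
  rw [← natCast_zmod_val z, isUnit_iff_coprime, val_natCast_of_lt (val_lt z),
    Nat.coprime_mul_iff_right, Nat.coprime_comm, hp₁.coprime_iff_not_dvd,
    Nat.coprime_comm, hp₂.coprime_iff_not_dvd]

theorem eq_zero_iff_dvd_val_and_dvd_val {m n : ℕ} (hmn : m.Coprime n) [NeZero (m * n)]
    (z : ZMod (m * n)) : z = 0 ↔ m ∣ z.val ∧ n ∣ z.val := by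
  refine ⟨by rintro rfl; simp, fun ⟨hm, hn⟩ => ?_⟩
  rw [← val_eq_zero]
  exact Nat.eq_zero_of_dvd_of_lt (hmn.mul_dvd_of_dvd_of_dvd hm hn) (val_lt z)

theorem mem_image_multSet_iff {a b : ℕ} [NeZero (a * b)] (z : ZMod (a * b)) :
    z ∈ (multSet a b).image Nat.cast ↔ z ≠ 0 ∧ a ∣ z.val := by
  have ha : 0 < a := Nat.pos_of_ne_zero (left_ne_zero_of_mul (NeZero.ne (a * b)))
  simp only [multSet, mem_image, mem_Icc, exists_exists_and_eq_and]
  constructor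
  · rintro ⟨k, ⟨hk1, hkb⟩, rfl⟩
    have hval : ((k * a : ℕ) : ZMod (a * b)).val = k * a :=
      val_natCast_of_lt (by rw [mul_comm a]; exact Nat.mul_lt_mul_of_pos_right (by omega) ha)
    rw [ne_eq, ← val_eq_zero, hval]
    exact ⟨by positivity, dvd_mul_left a k⟩
  · rintro ⟨hz, k, hk⟩
    have hkb : a * k < a * b := hk ▸ val_lt z
    refine ⟨k, ⟨?_, ?_⟩, ?_⟩
    · rw [ne_eq, ← val_eq_zero, hk] at hz
      exact Nat.pos_of_ne_zero (right_ne_zero_of_mul hz)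
    · have := Nat.lt_of_mul_lt_mul_left hkb
      omega
    · rw [Nat.mul_comm k a, ← hk, natCast_zmod_val]

theorem not_isUnit_of_mem_image_multSet {a b : ℕ} [NeZero (a * b)] (ha : a ≠ 1)
    {z : ZMod (a * b)} (hz : z ∈ (multSet a b).image Nat.cast) : ¬IsUnit z := by
  rw [← natCast_zmod_val z, isUnit_iff_coprime]
  exact fun hcop => ha (Nat.Coprime.eq_one_of_dvd
    (Nat.Coprime.coprime_dvd_left ((mem_image_multSet_iff z).mp hz).2 hcop) (dvd_mul_right a b))

theorem image_mul_image_multSet {a b : ℕ} [NeZero (a * b)] {u : ZMod (a * b)} (hu : IsUnit u) :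
    ((multSet a b).image Nat.cast).image (u * ·) = (multSet a b).image Nat.cast := by
  have hmaps : ((multSet a b).image Nat.cast).image (u * ·) ⊆ (multSet a b).image Nat.cast := by
    simp only [Finset.image_subset_iff, mem_image_multSet_iff]
    rintro z ⟨hz, hdvd⟩
    exact ⟨by rwa [ne_eq, hu.mul_right_eq_zero], by
      rw [val_mul, Nat.dvd_mod_iff (dvd_mul_right a b)]; exact hdvd.mul_left _⟩
  exact Finset.image_eq_of_image_subset_of_image_subset hu.mul_right_injective hmaps hmaps

end ZMod

namespace IsPrimitiveRoot

variable {K : Type*} [CommRing K] {β : K} {n : ℕ}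

theorem pow_val_natCast (hβ : IsPrimitiveRoot β n) (a : ℕ) :
    β ^ (a : ZMod n).val = β ^ a := by
  rw [ZMod.val_natCast, hβ.eq_orderOf, pow_mod_orderOf]

theorem pow_val_natCast_mul [NeZero n] (hβ : IsPrimitiveRoot β n) (a : ℕ) (z : ZMod n) :
    β ^ ((a : ZMod n) * z).val = (β ^ z.val) ^ a := by
  rw [← pow_mul, ← hβ.pow_val_natCast (z.val * a), Nat.cast_mul, ZMod.natCast_zmod_val,
    mul_comm]

theorem sum_pow_eq_sum_image_natCast (hβ : IsPrimitiveRoot β n) {A : Finset ℕ}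
    (hA : ∀ i ∈ A, i < n) :
    ∑ i ∈ A, β ^ i = ∑ z ∈ A.image (Nat.cast : ℕ → ZMod n), β ^ z.val := by
  rw [sum_image fun i hi j hj hij => ?_]
  · simp only [hβ.pow_val_natCast]
  · rw [← ZMod.val_natCast_of_lt (hA i hi), hij, ZMod.val_natCast_of_lt (hA j hj)]

variable [IsDomain K]

theorem sum_filter_dvd_val_eq_zero [NeZero n] (hβ : IsPrimitiveRoot β n) {d : ℕ} (hd : d ∣ n)
    (hdn : d < n) : ∑ z : ZMod n with d ∣ z.val, β ^ z.val = 0 := by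
  obtain ⟨m, rfl⟩ := hd
  have hd : 0 < d := Nat.pos_of_ne_zero (left_ne_zero_of_mul (NeZero.ne (d * m)))
  have hmul : ∀ k < m, d * k < d * m := fun k hk => Nat.mul_lt_mul_of_pos_left hk hd
  have himage : univ.filter (fun z : ZMod (d * m) => d ∣ z.val) =
      (range m).image fun k => ((d * k : ℕ) : ZMod (d * m)) := by
    ext z
    simp only [mem_filter, mem_univ, true_and, mem_image, mem_range]
    constructor
    · rintro ⟨k, hk⟩
      exact ⟨k, Nat.lt_of_mul_lt_mul_left (hk ▸ ZMod.val_lt z),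
        by rw [← hk, ZMod.natCast_zmod_val]⟩
    · rintro ⟨k, hk, rfl⟩
      exact ⟨k, ZMod.val_natCast_of_lt (hmul k hk)⟩
  rw [himage, sum_image fun k hk l hl hkl => ?_]
  · simp only [hβ.pow_val_natCast, pow_mul]
    exact (hβ.pow (Nat.pos_of_ne_zero (NeZero.ne _)) rfl).geom_sum_eq_zero (by nlinarith)
  · have := congrArg ZMod.val hkl
    rw [ZMod.val_natCast_of_lt (hmul k (mem_range.mp hk)),
      ZMod.val_natCast_of_lt (hmul l (mem_range.mp hl))] at this
    exact Nat.eq_of_mul_eq_mul_left hd this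

theorem sum_isUnit_eq_one {p₁ p₂ : ℕ} (hp₁ : p₁.Prime) (hp₂ : p₂.Prime)
    (hne : p₁ ≠ p₂) [NeZero (p₁ * p₂)] (hβ : IsPrimitiveRoot β (p₁ * p₂)) :
    ∑ z : ZMod (p₁ * p₂) with IsUnit z, β ^ z.val = 1 := by
  have hcop : p₁.Coprime p₂ := (Nat.coprime_primes hp₁ hp₂).mpr hne
  have hlt₁ : p₁ < p₁ * p₂ := lt_mul_right hp₁.pos hp₂.one_lt
  have hlt₂ : p₂ < p₁ * p₂ := lt_mul_left hp₂.pos hp₁.one_lt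
  have hall : ∑ z : ZMod (p₁ * p₂), β ^ z.val = 0 := by
    simpa using hβ.sum_filter_dvd_val_eq_zero (one_dvd _) (hp₁.one_lt.trans hlt₁)
  have hinter : (univ.filter fun z : ZMod (p₁ * p₂) => p₁ ∣ z.val) ∩
      (univ.filter fun z => p₂ ∣ z.val) = {0} := by
    ext z
    simp [ZMod.eq_zero_iff_dvd_val_and_dvd_val hcop z]
  have hnonunit : ∑ z : ZMod (p₁ * p₂) with ¬IsUnit z, β ^ z.val = -1 := by
    have := sum_union_inter (s₁ := univ.filter fun z : ZMod (p₁ * p₂) => p₁ ∣ z.val)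
      (s₂ := univ.filter fun z => p₂ ∣ z.val) (f := fun z => β ^ z.val)
    rw [hinter, sum_singleton, ← filter_or, ZMod.val_zero, pow_zero,
      hβ.sum_filter_dvd_val_eq_zero (dvd_mul_right _ _) hlt₁,
      hβ.sum_filter_dvd_val_eq_zero (dvd_mul_left _ _) hlt₂] at this
    simp only [ZMod.isUnit_iff_not_dvd_val hp₁ hp₂, not_and_or, not_not]
    linear_combination this
  rw [← sum_filter_add_sum_filter_not univ IsUnit, hnonunit] at hall
  linear_combination hall

theorem sum_image_multSet_eq_neg_one {a b : ℕ} [NeZero (a * b)] (hβ : IsPrimitiveRoot β (a * b))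
    (hb : 1 < b) : ∑ z ∈ (multSet a b).image Nat.cast, β ^ (z : ZMod (a * b)).val = -1 := by
  have ha : 0 < a := Nat.pos_of_ne_zero (left_ne_zero_of_mul (NeZero.ne (a * b)))
  have hN : (multSet a b).image (Nat.cast : ℕ → ZMod (a * b)) =
      (univ.filter fun z : ZMod (a * b) => a ∣ z.val).erase 0 := by
    ext z
    rw [ZMod.mem_image_multSet_iff, mem_erase, mem_filter]
    simp only [mem_univ, true_and]
  rw [hN, sum_erase_eq_sub (by simp), hβ.sum_filter_dvd_val_eq_zero (dvd_mul_right a b)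
    (lt_mul_right ha hb), ZMod.val_zero, pow_zero, zero_sub]

end IsPrimitiveRoot

structure WhitemanParams (n1 n2 g x : ℕ) : Prop where
  prime_left : n1.Prime
  prime_right : n2.Prime
  ne : n1 ≠ n2
  gcd_eq : Nat.gcd (n1 - 1) (n2 - 1) = 6
  orderOf_left : orderOf (g : ZMod n1) = n1 - 1
  orderOf_right : orderOf (g : ZMod n2) = n2 - 1
  mod_left : x % n1 = g % n1
  mod_right : x % n2 = 1 % n2

def whitemanClass (n1 n2 g x i : ℕ) : Finset (ZMod (n1 * n2)) :=
  (whitemanD n1 n2 g x i).image Nat.cast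

def whitemanTriple (n1 n2 g x j : ℕ) : Finset (ZMod (n1 * n2)) :=
  whitemanClass n1 n2 g x j ∪ whitemanClass n1 n2 g x (j + 1) ∪ whitemanClass n1 n2 g x (j + 2)

theorem lt_of_mem_whitemanSIdx {n1 n2 g x m : ℕ} [NeZero (n1 * n2)]
    (hm : m ∈ whitemanSIdx n1 n2 g x) : m < n1 * n2 := by
  have hpos := NeZero.pos (n1 * n2)
  simp only [whitemanSIdx, whitemanD, multSet, mem_union, mem_image, mem_Icc, mem_range] at hm
  rcases hm with ((⟨k, ⟨-, hk⟩, rfl⟩ | ⟨s, -, rfl⟩) | ⟨s, -, rfl⟩) | ⟨s, -, rfl⟩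
  · rw [mul_comm n1]
    exact Nat.mul_lt_mul_of_pos_right (by have := Nat.pos_of_mul_pos_left hpos; omega)
      (Nat.pos_of_mul_pos_right hpos)
  all_goals exact Nat.mod_lt _ hpos

theorem mem_whitemanTriple_iff {n1 n2 g x j : ℕ} {z : ZMod (n1 * n2)} :
    z ∈ whitemanTriple n1 n2 g x j ↔ ∃ k < 3, z ∈ whitemanClass n1 n2 g x (j + k) := by
  simp only [whitemanTriple, mem_union]
  constructor
  · rintro ((h | h) | h)
    exacts [⟨0, by norm_num, h⟩, ⟨1, by norm_num, h⟩, ⟨2, by norm_num, h⟩]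
  · rintro ⟨k, hk, h⟩
    interval_cases k <;> simp_all

namespace WhitemanParams

variable {n1 n2 g x : ℕ}

local notation "π₁" => ZMod.castHom (dvd_mul_right n1 n2) (ZMod n1)
local notation "π₂" => ZMod.castHom (dvd_mul_left n2 n1) (ZMod n2)

theorem coprime (hW : WhitemanParams n1 n2 g x) : n1.Coprime n2 :=
  (Nat.coprime_primes hW.prime_left hW.prime_right).mpr hW.ne

theorem six_dvd_left (hW : WhitemanParams n1 n2 g x) : 6 ∣ n1 - 1 :=
  hW.gcd_eq ▸ Nat.gcd_dvd_left _ _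

theorem six_dvd_right (hW : WhitemanParams n1 n2 g x) : 6 ∣ n2 - 1 :=
  hW.gcd_eq ▸ Nat.gcd_dvd_right _ _

theorem pow_eq_pow_iff_left (hW : WhitemanParams n1 n2 g x) {a b : ℕ} :
    (g : ZMod n1) ^ a = (g : ZMod n1) ^ b ↔ a ≡ b [MOD n1 - 1] :=
  pow_eq_pow_iff_modEq_of_orderOf_eq hW.orderOf_left (by have := hW.prime_left.two_le; omega)

theorem pow_eq_pow_iff_right (hW : WhitemanParams n1 n2 g x) {a b : ℕ} :
    (g : ZMod n2) ^ a = (g : ZMod n2) ^ b ↔ a ≡ b [MOD n2 - 1] :=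
  pow_eq_pow_iff_modEq_of_orderOf_eq hW.orderOf_right (by have := hW.prime_right.two_le; omega)

theorem castHom_left_pow_mul_pow (hW : WhitemanParams n1 n2 g x) (s i : ℕ) :
    π₁ ((g : ZMod (n1 * n2)) ^ s * (x : ZMod (n1 * n2)) ^ i) = (g : ZMod n1) ^ (s + i) := by
  rw [map_mul, map_pow, map_pow, map_natCast, map_natCast, pow_add,
    (ZMod.natCast_eq_natCast_iff' x g n1).mpr hW.mod_left]

theorem castHom_right_pow_mul_pow (hW : WhitemanParams n1 n2 g x) (s i : ℕ) :
    π₂ ((g : ZMod (n1 * n2)) ^ s * (x : ZMod (n1 * n2)) ^ i) = (g : ZMod n2) ^ s := by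
  rw [map_mul, map_pow, map_pow, map_natCast, map_natCast,
    (ZMod.natCast_eq_natCast_iff' x 1 n2).mpr hW.mod_right, Nat.cast_one, one_pow, mul_one]

theorem modEq_of_pow_mul_pow_eq (hW : WhitemanParams n1 n2 g x) {s i t j : ℕ}
    (h : (g : ZMod (n1 * n2)) ^ s * (x : ZMod (n1 * n2)) ^ i =
      (g : ZMod (n1 * n2)) ^ t * (x : ZMod (n1 * n2)) ^ j) : i ≡ j [MOD 6] := by
  have h₁ := congrArg π₁ h
  have h₂ := congrArg π₂ h
  rw [hW.castHom_left_pow_mul_pow, hW.castHom_left_pow_mul_pow, hW.pow_eq_pow_iff_left] at h₁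
  rw [hW.castHom_right_pow_mul_pow, hW.castHom_right_pow_mul_pow, hW.pow_eq_pow_iff_right] at h₂
  exact (h₂.of_dvd hW.six_dvd_right).add_left_cancel (h₁.of_dvd hW.six_dvd_left)

theorem exists_eq_pow_mul_pow_of_modEq (hW : WhitemanParams n1 n2 g x) {z : ZMod (n1 * n2)}
    {u v i : ℕ} (hu : π₁ z = (g : ZMod n1) ^ u) (hv : π₂ z = (g : ZMod n2) ^ v)
    (h : u ≡ v + i [MOD 6]) :
    ∃ s, z = (g : ZMod (n1 * n2)) ^ s * (x : ZMod (n1 * n2)) ^ i := by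
  obtain ⟨t, ht₁, ht₂⟩ :=
    Nat.chineseRemainder' (hW.gcd_eq ▸ h : u ≡ v + i [MOD (n1 - 1).gcd (n2 - 1)])
  have := hW.prime_left.two_le
  have := hW.prime_right.two_le
  -- shifting `t` by a common multiple of both moduli that is at least `i` lets us subtract `i`
  set L := i * ((n1 - 1) * (n2 - 1))
  have hL : i ≤ L := Nat.le_mul_of_pos_right i (Nat.mul_pos (by omega) (by omega))
  have hL₁ : L ≡ 0 [MOD n1 - 1] :=
    Nat.modEq_zero_iff_dvd.mpr ((dvd_mul_right _ _).mul_left i)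
  have hL₂ : L ≡ 0 [MOD n2 - 1] :=
    Nat.modEq_zero_iff_dvd.mpr ((dvd_mul_left _ _).mul_left i)
  refine ⟨t + L - i, ZMod.eq_of_castHom_eq hW.coprime ?_ ?_⟩
  · rw [hu, hW.castHom_left_pow_mul_pow, hW.pow_eq_pow_iff_left, Nat.sub_add_cancel (by omega)]
    exact (ht₁.add hL₁).symm
  · rw [hv, hW.castHom_right_pow_mul_pow, hW.pow_eq_pow_iff_right]
    refine (Nat.ModEq.add_right_cancel' i ?_).symm
    rw [Nat.sub_add_cancel (by omega)]
    exact ht₂.add hL₂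

theorem card_div_six_pos (hW : WhitemanParams n1 n2 g x) : 0 < (n1 - 1) * (n2 - 1) / 6 := by
  have := hW.prime_left.two_le
  have := hW.prime_right.two_le
  have := Nat.le_of_dvd (by omega) hW.six_dvd_right
  rw [Nat.mul_div_assoc _ hW.six_dvd_right]
  exact Nat.mul_pos (by omega) (by omega)

theorem pow_card_div_six_eq_one (hW : WhitemanParams n1 n2 g x) :
    (g : ZMod (n1 * n2)) ^ ((n1 - 1) * (n2 - 1) / 6) = 1 := by
  refine ZMod.eq_of_castHom_eq hW.coprime ?_ ?_ <;> rw [map_pow, map_natCast, map_one,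
    ← orderOf_dvd_iff_pow_eq_one]
  · rw [hW.orderOf_left, Nat.mul_div_assoc _ hW.six_dvd_right]
    exact dvd_mul_right _ _
  · rw [hW.orderOf_right, mul_comm, Nat.mul_div_assoc _ hW.six_dvd_left]
    exact dvd_mul_right _ _

theorem exists_pow_eq_pow_six (hW : WhitemanParams n1 n2 g x) :
    ∃ s, (x : ZMod (n1 * n2)) ^ 6 = (g : ZMod (n1 * n2)) ^ s := by
  have hx : (x : ZMod (n1 * n2)) ^ 6 = (g : ZMod (n1 * n2)) ^ 0 * (x : ZMod (n1 * n2)) ^ 6 := by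
    rw [pow_zero, one_mul]
  obtain ⟨s, hs⟩ := hW.exists_eq_pow_mul_pow_of_modEq (z := (x : ZMod (n1 * n2)) ^ 6)
    (u := 6) (v := 0) (i := 0)
    (by rw [hx, hW.castHom_left_pow_mul_pow]) (by rw [hx, hW.castHom_right_pow_mul_pow]) rfl
  exact ⟨s, by rw [hs, pow_zero, mul_one]⟩

theorem mem_whitemanClass_iff (hW : WhitemanParams n1 n2 g x) {i : ℕ} {z : ZMod (n1 * n2)} :
    z ∈ whitemanClass n1 n2 g x i ↔
      ∃ s, z = (g : ZMod (n1 * n2)) ^ s * (x : ZMod (n1 * n2)) ^ i := by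
  simp only [whitemanClass, whitemanD, mem_image, mem_range, exists_exists_and_eq_and,
    ZMod.natCast_mod, Nat.cast_mul, Nat.cast_pow]
  constructor
  · rintro ⟨s, -, rfl⟩
    exact ⟨s, rfl⟩
  · rintro ⟨s, rfl⟩
    refine ⟨s % ((n1 - 1) * (n2 - 1) / 6), Nat.mod_lt _ hW.card_div_six_pos, ?_⟩
    rw [← pow_mod_orderOf, Nat.mod_mod_of_dvd _ (orderOf_dvd_of_pow_eq_one
        hW.pow_card_div_six_eq_one), pow_mod_orderOf]

variable {i j : ℕ} {z w : ZMod (n1 * n2)}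

theorem mul_mem_whitemanClass (hW : WhitemanParams n1 n2 g x) (hz : z ∈ whitemanClass n1 n2 g x i)
    (hw : w ∈ whitemanClass n1 n2 g x j) : z * w ∈ whitemanClass n1 n2 g x (i + j) := by
  obtain ⟨s, rfl⟩ := hW.mem_whitemanClass_iff.mp hz
  obtain ⟨t, rfl⟩ := hW.mem_whitemanClass_iff.mp hw
  exact hW.mem_whitemanClass_iff.mpr ⟨s + t, by ring⟩

theorem pow_mem_whitemanClass (hW : WhitemanParams n1 n2 g x) (hz : z ∈ whitemanClass n1 n2 g x i)
    (m : ℕ) : z ^ m ∈ whitemanClass n1 n2 g x (i * m) := by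
  obtain ⟨s, rfl⟩ := hW.mem_whitemanClass_iff.mp hz
  exact hW.mem_whitemanClass_iff.mpr ⟨s * m, by ring⟩

theorem mem_whitemanClass_of_add_six (hW : WhitemanParams n1 n2 g x)
    (hz : z ∈ whitemanClass n1 n2 g x (i + 6)) : z ∈ whitemanClass n1 n2 g x i := by
  obtain ⟨s, rfl⟩ := hW.mem_whitemanClass_iff.mp hz
  obtain ⟨t, ht⟩ := hW.exists_pow_eq_pow_six
  exact hW.mem_whitemanClass_iff.mpr ⟨s + t, by rw [pow_add, ht]; ring⟩

theorem isUnit_of_mem_whitemanClass (hW : WhitemanParams n1 n2 g x)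
    (hz : z ∈ whitemanClass n1 n2 g x i) : IsUnit z := by
  obtain ⟨s, rfl⟩ := hW.mem_whitemanClass_iff.mp hz
  obtain ⟨t, ht⟩ := hW.exists_pow_eq_pow_six
  have hg : IsUnit (g : ZMod (n1 * n2)) := IsUnit.of_pow_eq_one hW.pow_card_div_six_eq_one
    hW.card_div_six_pos.ne'
  have hx : IsUnit (x : ZMod (n1 * n2)) := (isUnit_pow_iff (by norm_num)).mp (ht ▸ hg.pow t)
  exact (hg.pow s).mul (hx.pow i)

theorem modEq_of_mem_whitemanClass (hW : WhitemanParams n1 n2 g x)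
    (hi : z ∈ whitemanClass n1 n2 g x i) (hj : z ∈ whitemanClass n1 n2 g x j) :
    i ≡ j [MOD 6] := by
  obtain ⟨s, rfl⟩ := hW.mem_whitemanClass_iff.mp hi
  obtain ⟨t, ht⟩ := hW.mem_whitemanClass_iff.mp hj
  exact hW.modEq_of_pow_mul_pow_eq ht

theorem exists_mem_whitemanClass_of_isUnit (hW : WhitemanParams n1 n2 g x) (hz : IsUnit z) :
    ∃ i < 6, z ∈ whitemanClass n1 n2 g x i := by
  have : Fact n1.Prime := ⟨hW.prime_left⟩
  have : Fact n2.Prime := ⟨hW.prime_right⟩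
  obtain ⟨u, hu⟩ := ZMod.exists_pow_eq_of_orderOf_eq hW.orderOf_left (hz.map π₁).ne_zero
  obtain ⟨v, hv⟩ := ZMod.exists_pow_eq_of_orderOf_eq hW.orderOf_right (hz.map π₂).ne_zero
  refine ⟨(u + 5 * v) % 6, Nat.mod_lt _ (by norm_num), hW.mem_whitemanClass_iff.mpr
    (hW.exists_eq_pow_mul_pow_of_modEq hu.symm hv.symm ?_)⟩
  unfold Nat.ModEq
  omega

theorem isUnit_of_mem_whitemanTriple (hW : WhitemanParams n1 n2 g x)
    (hz : z ∈ whitemanTriple n1 n2 g x j) : IsUnit z := by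
  obtain ⟨k, -, h⟩ := mem_whitemanTriple_iff.mp hz
  exact hW.isUnit_of_mem_whitemanClass h

theorem disjoint_whitemanTriple (hW : WhitemanParams n1 n2 g x) :
    Disjoint (whitemanTriple n1 n2 g x 0) (whitemanTriple n1 n2 g x 3) := by
  refine disjoint_left.mpr fun z hz hz' => ?_
  obtain ⟨k, hk, h⟩ := mem_whitemanTriple_iff.mp hz
  obtain ⟨k', hk', h'⟩ := mem_whitemanTriple_iff.mp hz'
  have := hW.modEq_of_mem_whitemanClass h h'
  unfold Nat.ModEq at this
  omega

theorem whitemanTriple_union [NeZero (n1 * n2)] (hW : WhitemanParams n1 n2 g x) :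
    whitemanTriple n1 n2 g x 0 ∪ whitemanTriple n1 n2 g x 3 = univ.filter IsUnit := by
  ext z
  simp only [mem_union, mem_filter, mem_univ, true_and]
  refine ⟨fun h => h.elim hW.isUnit_of_mem_whitemanTriple hW.isUnit_of_mem_whitemanTriple,
    fun hz => ?_⟩
  obtain ⟨i, hi, h⟩ := hW.exists_mem_whitemanClass_of_isUnit hz
  simp only [mem_whitemanTriple_iff]
  by_cases hi3 : i < 3
  · exact Or.inl ⟨i, hi3, by rwa [zero_add]⟩
  · exact Or.inr ⟨i - 3, by omega, by rwa [Nat.add_sub_cancel' (by omega)]⟩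

theorem image_mul_whitemanTriple (hW : WhitemanParams n1 n2 g x) {u : ZMod (n1 * n2)}
    (hu : u ∈ whitemanClass n1 n2 g x 3) :
    (whitemanTriple n1 n2 g x 0).image (u * ·) = whitemanTriple n1 n2 g x 3 := by
  have hshift : ∀ j,
      (whitemanTriple n1 n2 g x j).image (u * ·) ⊆ whitemanTriple n1 n2 g x (j + 3) := by
    intro j
    simp only [image_subset_iff, mem_whitemanTriple_iff]
    rintro z ⟨k, hk, hz⟩
    exact ⟨k, hk, by simpa only [show 3 + (j + k) = j + 3 + k by omega] using
      hW.mul_mem_whitemanClass hu hz⟩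
  refine image_eq_of_image_subset_of_image_subset
    (hW.isUnit_of_mem_whitemanClass hu).mul_right_injective (hshift 0)
    ((hshift 3).trans fun z hz => ?_)
  obtain ⟨k, hk, h⟩ := mem_whitemanTriple_iff.mp hz
  exact mem_whitemanTriple_iff.mpr ⟨k, hk, hW.mem_whitemanClass_of_add_six
    (by simpa only [show 3 + 3 + k = 0 + k + 6 by omega] using h)⟩

theorem pow_three_mem_whitemanClass_three (hW : WhitemanParams n1 n2 g x) {q : ℕ}
    (hq : q % (n1 * n2) ∈
      whitemanD n1 n2 g x 1 ∪ whitemanD n1 n2 g x 3 ∪ whitemanD n1 n2 g x 5) :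
    (q : ZMod (n1 * n2)) ^ 3 ∈ whitemanClass n1 n2 g x 3 := by
  have hcube : ∀ i, q % (n1 * n2) ∈ whitemanD n1 n2 g x i →
      (q : ZMod (n1 * n2)) ^ 3 ∈ whitemanClass n1 n2 g x (i * 3) := fun i h =>
    hW.pow_mem_whitemanClass (by rw [← ZMod.natCast_mod]; exact mem_image_of_mem _ h) 3
  simp only [mem_union] at hq
  rcases hq with (h | h) | h
  · exact hcube 1 h
  · exact hW.mem_whitemanClass_of_add_six (hcube 3 h)
  · exact hW.mem_whitemanClass_of_add_six (hW.mem_whitemanClass_of_add_six (hcube 5 h))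

theorem sum_pow_card_pow_three_add_sum [NeZero (n1 * n2)] (hW : WhitemanParams n1 n2 g x)
    (F : Type*) [Field F] [Fintype F] {K : Type*} [CommRing K] [IsDomain K] [Algebra F K]
    (hq : Fintype.card F % (n1 * n2) ∈
      whitemanD n1 n2 g x 1 ∪ whitemanD n1 n2 g x 3 ∪ whitemanD n1 n2 g x 5)
    {β : K} (hβ : IsPrimitiveRoot β (n1 * n2)) :
    (∑ i ∈ whitemanSIdx n1 n2 g x, β ^ i) ^ Fintype.card F ^ 3 +
      ∑ i ∈ whitemanSIdx n1 n2 g x, β ^ i = -1 := by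
  set N := (multSet n1 n2).image (Nat.cast : ℕ → ZMod (n1 * n2))
  set Q := (Fintype.card F : ZMod (n1 * n2)) ^ 3
  have hQ : Q ∈ whitemanClass n1 n2 g x 3 := hW.pow_three_mem_whitemanClass_three hq
  have hQunit := hW.isUnit_of_mem_whitemanClass hQ
  have hdisj : ∀ j, Disjoint N (whitemanTriple n1 n2 g x j) := fun j =>
    disjoint_left.mpr fun z hzN hzT => ZMod.not_isUnit_of_mem_image_multSet
      hW.prime_left.one_lt.ne' hzN (hW.isUnit_of_mem_whitemanTriple hzT)
  have hS : ∑ i ∈ whitemanSIdx n1 n2 g x, β ^ i =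
      ∑ z ∈ N ∪ whitemanTriple n1 n2 g x 0, β ^ z.val := by
    rw [hβ.sum_pow_eq_sum_image_natCast fun i => lt_of_mem_whitemanSIdx]
    simp only [whitemanSIdx, whitemanTriple, whitemanClass, image_union, union_assoc, N, zero_add]
  have hSq : (∑ i ∈ whitemanSIdx n1 n2 g x, β ^ i) ^ Fintype.card F ^ 3 =
      ∑ z ∈ N ∪ whitemanTriple n1 n2 g x 3, β ^ z.val := by
    rw [hS, FiniteField.sum_pow_card_pow]
    calc ∑ z ∈ N ∪ whitemanTriple n1 n2 g x 0, (β ^ z.val) ^ Fintype.card F ^ 3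
        = ∑ z ∈ N ∪ whitemanTriple n1 n2 g x 0, β ^ (Q * z).val :=
          sum_congr rfl fun z _ => by rw [← hβ.pow_val_natCast_mul, Nat.cast_pow]
      _ = ∑ z ∈ (N ∪ whitemanTriple n1 n2 g x 0).image (Q * ·), β ^ z.val :=
          (sum_image (f := fun w => β ^ w.val) fun _ _ _ _ h => hQunit.mul_right_injective h).symm
      _ = ∑ z ∈ N ∪ whitemanTriple n1 n2 g x 3, β ^ z.val := by
          rw [image_union, ZMod.image_mul_image_multSet hQunit, hW.image_mul_whitemanTriple hQ]
  have hunits := sum_union hW.disjoint_whitemanTriple (f := fun z => β ^ z.val)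
  rw [hW.whitemanTriple_union, hβ.sum_isUnit_eq_one hW.prime_left hW.prime_right hW.ne] at hunits
  rw [hSq, hS, sum_union (hdisj 3), sum_union (hdisj 0),
    hβ.sum_image_multSet_eq_neg_one hW.prime_right.one_lt]
  linear_combination -hunits

end WhitemanParams

theorem S_beta_cubic_of_q_in_D135_general
    (n1 n2 : ℕ) (hp1 : n1.Prime) (hp2 : n2.Prime) (hne : n1 ≠ n2)
    (hgcd : Nat.gcd (n1 - 1) (n2 - 1) = 6)
    (g x : ℕ)
    (hg1 : orderOf (g : ZMod n1) = n1 - 1)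
    (hg2 : orderOf (g : ZMod n2) = n2 - 1)
    (hx1 : x % n1 = g % n1) (hx2 : x % n2 = 1 % n2)
    (q : ℕ) (F K : Type*) [Field F] [Fintype F] (hcard : Fintype.card F = q)
    [Field K] [Algebra F K]
    (hqmem : q % (n1 * n2) ∈
      whitemanD n1 n2 g x 1 ∪ whitemanD n1 n2 g x 3 ∪ whitemanD n1 n2 g x 5)
    (β : K) (hβ : IsPrimitiveRoot β (n1 * n2)) :
    (∑ i ∈ whitemanSIdx n1 n2 g x, β ^ i) ^ (q ^ 3)
        + (∑ i ∈ whitemanSIdx n1 n2 g x, β ^ i) + 1 = 0 ∧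
    (∑ i ∈ whitemanSIdx n1 n2 g x, β ^ i) ≠ 0 ∧
    (∑ i ∈ whitemanSIdx n1 n2 g x, β ^ i) ≠ -1 := by
  subst hcard
  have : NeZero (n1 * n2) := ⟨Nat.mul_ne_zero hp1.ne_zero hp2.ne_zero⟩
  have hW : WhitemanParams n1 n2 g x := ⟨hp1, hp2, hne, hgcd, hg1, hg2, hx1, hx2⟩
  have key := hW.sum_pow_card_pow_three_add_sum F hqmem hβ
  set S := ∑ i ∈ whitemanSIdx n1 n2 g x, β ^ i
  have hq3 : Fintype.card F ^ 3 ≠ 0 := pow_ne_zero 3 Fintype.card_ne_zero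
  refine ⟨by linear_combination key, fun h0 => ?_, fun h1 => ?_⟩
  · rw [h0, zero_pow hq3, add_zero] at key
    exact one_ne_zero (neg_eq_zero.mp key.symm)
  · rw [h1] at key
    exact pow_ne_zero (Fintype.card F ^ 3) (neg_ne_zero.mpr (one_ne_zero (α := K)))
      (by linear_combination key)

theorem S_beta_cubic_of_q_in_D135
    (n1 n2 : ℕ) (hp1 : n1.Prime) (hp2 : n2.Prime) (hne : n1 ≠ n2)
    (ho1 : Odd n1) (ho2 : Odd n2)
    (hgcd : Nat.gcd (n1 - 1) (n2 - 1) = 6)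
    (g x : ℕ)
    (hg1 : orderOf (g : ZMod n1) = n1 - 1)
    (hg2 : orderOf (g : ZMod n2) = n2 - 1)
    (hx1 : x % n1 = g % n1) (hx2 : x % n2 = 1 % n2)
    (q : ℕ) (F K : Type*) [Field F] [Fintype F] (hcard : Fintype.card F = q)
    [Field K] [Algebra F K]
    (hq : Nat.Coprime q (n1 * n2))
    (hqmem : q % (n1 * n2) ∈
      whitemanD n1 n2 g x 1 ∪ whitemanD n1 n2 g x 3 ∪ whitemanD n1 n2 g x 5)
    (β : K) (hβ : IsPrimitiveRoot β (n1 * n2)) :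
    (∑ i ∈ whitemanSIdx n1 n2 g x, β ^ i) ^ (q ^ 3)
        + (∑ i ∈ whitemanSIdx n1 n2 g x, β ^ i) + 1 = 0 ∧
    (∑ i ∈ whitemanSIdx n1 n2 g x, β ^ i) ≠ 0 ∧
    (∑ i ∈ whitemanSIdx n1 n2 g x, β ^ i) ≠ -1 :=
  S_beta_cubic_of_q_in_D135_general n1 n2 hp1 hp2 hne hgcd g x hg1 hg2 hx1 hx2 q F K hcard hqmem β
    hβ
end

section
/- Let $q$ be a prime power with $\gcd(q,n)=1$, $n = n_1 n_2$ as in the Whiteman generalized cyclotomy of order 6, and suppose $q \bmod n \in D_2 \cup D_4$. Let $\beta$ be a primitive $n$-th root of unity in an extension of $\mathrm{GF}(q)$ and $S(X) = \sum_{i \in N_1 \cup D_0 \cup D_1 \cup D_2} X^i$. Then $S(\beta)^{q^3} = S(\beta)$. -/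
open Finset Polynomial

theorem S_beta_qcubed_fixed_of_q_in_D24
    (n1 n2 : ℕ) (hp1 : n1.Prime) (hp2 : n2.Prime) (hne : n1 ≠ n2)
    (ho1 : Odd n1) (ho2 : Odd n2)
    (hgcd : Nat.gcd (n1 - 1) (n2 - 1) = 6)
    (g x : ℕ)
    (hg1 : orderOf (g : ZMod n1) = n1 - 1)
    (hg2 : orderOf (g : ZMod n2) = n2 - 1)
    (hx1 : x % n1 = g % n1) (hx2 : x % n2 = 1 % n2)
    (q : ℕ) (F K : Type*) [Field F] [Fintype F] (hcard : Fintype.card F = q)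
    [Field K] [Algebra F K]
    (hq : Nat.Coprime q (n1 * n2))
    (hqmem : q % (n1 * n2) ∈ whitemanD n1 n2 g x 2 ∪ whitemanD n1 n2 g x 4)
    (β : K) (hβ : IsPrimitiveRoot β (n1 * n2)) :
    (∑ i ∈ whitemanSIdx n1 n2 g x, β ^ i) ^ (q ^ 3)
      = ∑ i ∈ whitemanSIdx n1 n2 g x, β ^ i := by
  -- Notation
  set n : ℕ := n1 * n2 with hn
  set e : ℕ := (n1 - 1) * (n2 - 1) / 6 with he
  set S : Finset ℕ := whitemanSIdx n1 n2 g x with hS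
  -- basic positivity facts
  have h6d1 : 6 ∣ n1 - 1 := hgcd ▸ Nat.gcd_dvd_left _ _
  have h6d2 : 6 ∣ n2 - 1 := hgcd ▸ Nat.gcd_dvd_right _ _
  have hn1_pos : 0 < n1 := hp1.pos
  have hn2_pos : 0 < n2 := hp2.pos
  have hd1_pos : 0 < n1 - 1 := Nat.sub_pos_of_lt hp1.one_lt
  have hd2_pos : 0 < n2 - 1 := Nat.sub_pos_of_lt hp2.one_lt
  have hd1_ge : 6 ≤ n1 - 1 := Nat.le_of_dvd hd1_pos h6d1
  have hd2_ge : 6 ≤ n2 - 1 := Nat.le_of_dvd hd2_pos h6d2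
  have hnpos : 0 < n := Nat.mul_pos hn1_pos hn2_pos
  have he_pos : 0 < e := by
    have : (6 : ℕ) ≤ (n1 - 1) * (n2 - 1) :=
      le_trans hd1_ge (Nat.le_mul_of_pos_right _ hd2_pos)
    exact Nat.div_pos this (by norm_num)
  have hd1e : (n1 - 1) ∣ e := by
    obtain ⟨m2, hm2⟩ := h6d2
    refine ⟨m2, ?_⟩
    rw [he, hm2, show (n1-1) * (6 * m2) = ((n1-1) * m2) * 6 by ring,
      Nat.mul_div_cancel _ (by norm_num)]
  have hd2e : (n2 - 1) ∣ e := by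
    obtain ⟨m1, hm1⟩ := h6d1
    refine ⟨m1, ?_⟩
    rw [he, hm1, show (6 * m1) * (n2-1) = ((n2-1) * m1) * 6 by ring,
      Nat.mul_div_cancel _ (by norm_num)]
  have hcop12 : Nat.Coprime n1 n2 := (Nat.coprime_primes hp1 hp2).mpr hne
  -- congruences mod n from congruences mod n1 and n2
  have hcrt : ∀ a b : ℕ, a ≡ b [MOD n1] → a ≡ b [MOD n2] → a ≡ b [MOD n] :=
    fun a b h1 h2 => (Nat.modEq_and_modEq_iff_modEq_mul hcop12).mp ⟨h1, h2⟩
  -- g^e = 1 in ZMod n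
  have hord1 : g ^ (n1 - 1) ≡ 1 [MOD n1] := by
    have : ((g : ZMod n1)) ^ (n1 - 1) = 1 := by rw [← hg1]; exact pow_orderOf_eq_one _
    have := this
    rwa [← Nat.cast_pow, show (1 : ZMod n1) = ((1 : ℕ) : ZMod n1) by norm_cast,
      ZMod.natCast_eq_natCast_iff] at this
  have hord2 : g ^ (n2 - 1) ≡ 1 [MOD n2] := by
    have : ((g : ZMod n2)) ^ (n2 - 1) = 1 := by rw [← hg2]; exact pow_orderOf_eq_one _
    rwa [← Nat.cast_pow, show (1 : ZMod n2) = ((1 : ℕ) : ZMod n2) by norm_cast,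
      ZMod.natCast_eq_natCast_iff] at this
  have hpow_one : ∀ m d : ℕ, d ∣ m → g ^ d ≡ 1 [MOD n1] → g ^ d ≡ 1 [MOD n2] →
      g ^ m ≡ 1 [MOD n] := by
    intro m d hdm h1 h2
    obtain ⟨c, rfl⟩ := hdm
    have e1 : g ^ (d * c) ≡ 1 [MOD n1] := by
      calc g ^ (d * c) = (g ^ d) ^ c := by rw [pow_mul]
        _ ≡ 1 ^ c [MOD n1] := h1.pow c
        _ = 1 := one_pow c
    have e2 : g ^ (d * c) ≡ 1 [MOD n2] := by
      calc g ^ (d * c) = (g ^ d) ^ c := by rw [pow_mul]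
        _ ≡ 1 ^ c [MOD n2] := h2.pow c
        _ = 1 := one_pow c
    exact hcrt _ _ e1 e2
  have hge_nat : g ^ e ≡ 1 [MOD n] := by
    have e1 : g ^ e ≡ 1 [MOD n1] := by
      obtain ⟨c, hc⟩ := hd1e
      calc g ^ e = (g ^ (n1-1)) ^ c := by rw [← pow_mul, ← hc]
        _ ≡ 1 ^ c [MOD n1] := hord1.pow c
        _ = 1 := one_pow c
    have e2 : g ^ e ≡ 1 [MOD n2] := by
      obtain ⟨c, hc⟩ := hd2e
      calc g ^ e = (g ^ (n2-1)) ^ c := by rw [← pow_mul, ← hc]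
        _ ≡ 1 ^ c [MOD n2] := hord2.pow c
        _ = 1 := one_pow c
    exact hcrt _ _ e1 e2
  have hge : (g : ZMod n) ^ e = 1 := by
    have := (ZMod.natCast_eq_natCast_iff _ _ _).mpr hge_nat
    push_cast at this
    simpa using this
  have hgpow : ∀ m : ℕ, (g : ZMod n) ^ m = (g : ZMod n) ^ (m % e) := by
    intro m
    conv_lhs => rw [← Nat.div_add_mod m e]
    rw [pow_add, pow_mul, hge, one_pow, one_mul]
  -- construction of t0 with x^6 ≡ g^t0 [MOD n]
  obtain ⟨m1, hm1⟩ := h6d1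
  obtain ⟨m2, hm2⟩ := h6d2
  have hm1_pos : 0 < m1 := by omega
  have hm2_pos : 0 < m2 := by omega
  have hcopm : Nat.Coprime m2 m1 := by
    have : Nat.gcd (6 * m1) (6 * m2) = 6 := by rw [← hm1, ← hm2, hgcd]
    rw [Nat.gcd_mul_left] at this
    have h1 : Nat.gcd m1 m2 = 1 := by omega
    exact Nat.Coprime.symm h1
  set c : ℕ := ((m2 : ZMod m1)⁻¹).val with hc
  haveI : NeZero m1 := ⟨hm1_pos.ne'⟩
  have hm2c : m2 * c ≡ 1 [MOD m1] := by
    have h1 : ((m2 * c : ℕ) : ZMod m1) = ((1 : ℕ) : ZMod m1) := by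
      push_cast
      rw [hc, ZMod.natCast_zmod_val]
      exact ZMod.coe_mul_inv_eq_one m2 hcopm
    exact (ZMod.natCast_eq_natCast_iff _ _ _).mp h1
  set t0 : ℕ := (n2 - 1) * c with ht0def
  have hgmod1 : ∀ a : ℕ, g ^ a ≡ g ^ (a % (n1 - 1)) [MOD n1] := by
    intro a
    conv_lhs => rw [← Nat.div_add_mod a (n1 - 1)]
    calc g ^ ((n1-1) * (a / (n1-1)) + a % (n1-1))
        = (g ^ (n1-1)) ^ (a / (n1-1)) * g ^ (a % (n1-1)) := by rw [pow_add, pow_mul]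
      _ ≡ 1 ^ (a / (n1-1)) * g ^ (a % (n1-1)) [MOD n1] :=
          Nat.ModEq.mul_right _ (hord1.pow _)
      _ = g ^ (a % (n1-1)) := by rw [one_pow, one_mul]
  have ht0mod1 : g ^ t0 ≡ g ^ 6 [MOD n1] := by
    have h6 : t0 ≡ 6 [MOD n1 - 1] := by
      have h := Nat.ModEq.mul_left' (c := 6) hm2c
      rw [hm1]
      calc t0 = 6 * (m2 * c) := by rw [ht0def, hm2]; ring
        _ ≡ 6 * 1 [MOD 6 * m1] := h
        _ = 6 := by ring
    calc g ^ t0 ≡ g ^ (t0 % (n1-1)) [MOD n1] := hgmod1 t0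
      _ = g ^ (6 % (n1-1)) := by rw [show t0 % (n1-1) = 6 % (n1-1) from h6]
      _ ≡ g ^ 6 [MOD n1] := (hgmod1 6).symm
  have ht0mod2 : g ^ t0 ≡ 1 [MOD n2] := by
    calc g ^ t0 = (g ^ (n2 - 1)) ^ c := by rw [ht0def, pow_mul]
      _ ≡ 1 ^ c [MOD n2] := hord2.pow c
      _ = 1 := one_pow c
  have hx6 : x ^ 6 ≡ g ^ t0 [MOD n] := by
    have e1 : x ^ 6 ≡ g ^ t0 [MOD n1] :=
      (Nat.ModEq.pow 6 (show x ≡ g [MOD n1] from hx1)).trans ht0mod1.symm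
    have e2 : x ^ 6 ≡ g ^ t0 [MOD n2] := by
      calc x ^ 6 ≡ 1 ^ 6 [MOD n2] := Nat.ModEq.pow 6 (show x ≡ 1 [MOD n2] from hx2)
        _ = 1 := one_pow 6
        _ ≡ g ^ t0 [MOD n2] := ht0mod2.symm
    exact hcrt _ _ e1 e2
  have hx6z : (x : ZMod n) ^ 6 = (g : ZMod n) ^ t0 := by
    have := (ZMod.natCast_eq_natCast_iff _ _ _).mpr hx6
    push_cast at this
    exact this
  -- q^3 is a power of g mod n
  have hTgen : ∀ j s : ℕ, g ^ s * x ^ j % (n1 * n2) = q % (n1 * n2) →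
      (q : ZMod n) = (g : ZMod n) ^ s * (x : ZMod n) ^ j := by
    intro j s hs
    have h1 : ((g ^ s * x ^ j % (n1 * n2) : ℕ) : ZMod n) = ((q % (n1*n2) : ℕ) : ZMod n) := by
      rw [hs]
    rw [ZMod.natCast_mod, ZMod.natCast_mod] at h1
    push_cast at h1
    exact h1.symm
  have hT : ∃ T : ℕ, (q : ZMod n) ^ 3 = (g : ZMod n) ^ T := by
    rcases Finset.mem_union.mp hqmem with hmem | hmem
    · obtain ⟨s, _, hs⟩ := Finset.mem_image.mp hmem
      exact ⟨3 * s + t0, by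
        rw [hTgen 2 s hs, mul_pow, ← pow_mul (g : ZMod n) s 3, ← pow_mul (x : ZMod n) 2 3,
          show s * 3 = 3 * s by ring, show (2 * 3 : ℕ) = 6 by norm_num, hx6z, ← pow_add]⟩
    · obtain ⟨s, _, hs⟩ := Finset.mem_image.mp hmem
      exact ⟨3 * s + 2 * t0, by
        rw [hTgen 4 s hs, mul_pow, ← pow_mul (g : ZMod n) s 3, ← pow_mul (x : ZMod n) 4 3,
          show s * 3 = 3 * s by ring, show (4 * 3 : ℕ) = 6 * 2 by norm_num,
          pow_mul (x : ZMod n) 6 2, hx6z, ← pow_mul (g : ZMod n) t0 2, ← pow_add,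
          show 3 * s + t0 * 2 = 3 * s + 2 * t0 by ring]⟩
  obtain ⟨T, hT⟩ := hT
  -- the reindexing map
  set σ : ℕ → ℕ := fun i => i * q ^ 3 % n with hσ
  have hmodeq : ∀ a b : ℕ, ((a : ZMod n) = (b : ZMod n)) → a % n = b % n :=
    fun a b h => (ZMod.natCast_eq_natCast_iff' a b n).mp h
  -- σ maps each D_j into itself
  have hDmap : ∀ j i, i ∈ whitemanD n1 n2 g x j → σ i ∈ whitemanD n1 n2 g x j := by
    intro j i hi
    obtain ⟨s, hs, rfl⟩ := Finset.mem_image.mp hi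
    refine Finset.mem_image.mpr ⟨(s + T) % e, Finset.mem_range.mpr (Nat.mod_lt _ he_pos), ?_⟩
    have key : ((g ^ ((s + T) % e) * x ^ j : ℕ) : ZMod n)
        = (((g ^ s * x ^ j % (n1 * n2)) * q ^ 3 : ℕ) : ZMod n) := by
      push_cast [ZMod.natCast_mod]
      rw [← hgpow (s + T), pow_add]
      rw [hT]
      ring
    exact hmodeq _ _ key
  -- σ maps multSet into itself
  have hNmap : ∀ i, i ∈ multSet n1 n2 → σ i ∈ multSet n1 n2 := by
    intro i hi
    obtain ⟨k, hk, rfl⟩ := Finset.mem_image.mp hi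
    rw [Finset.mem_Icc] at hk
    have hσi : σ (k * n1) = n1 * (k * q ^ 3 % n2) := by
      show k * n1 * q ^ 3 % n = n1 * (k * q ^ 3 % n2)
      rw [show k * n1 * q ^ 3 = n1 * (k * q ^ 3) by ring, hn, Nat.mul_mod_mul_left]
    have hklt : k * q ^ 3 % n2 < n2 := Nat.mod_lt _ hn2_pos
    have hkne : k * q ^ 3 % n2 ≠ 0 := by
      intro h0
      have hdvd : n2 ∣ k * q ^ 3 := Nat.dvd_iff_mod_eq_zero.mpr h0
      rcases (Nat.Prime.dvd_mul hp2).mp hdvd with h | h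
      · have : n2 ≤ k := Nat.le_of_dvd (by omega) h
        omega
      · have : n2 ∣ q := hp2.dvd_of_dvd_pow h
        have hc2 : Nat.Coprime q n2 := Nat.Coprime.coprime_dvd_right ⟨n1, by rw [hn]; ring⟩ hq
        have := Nat.Coprime.eq_one_of_dvd hc2.symm this
        omega
    refine Finset.mem_image.mpr ⟨k * q ^ 3 % n2, Finset.mem_Icc.mpr ⟨by omega, by omega⟩, ?_⟩
    rw [hσi]; ring
  -- σ maps S into S
  have hmap : ∀ i ∈ S, σ i ∈ S := by
    intro i hi
    rw [hS, whitemanSIdx] at hi ⊢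
    rcases Finset.mem_union.mp hi with hi | hi
    · rcases Finset.mem_union.mp hi with hi | hi
      · rcases Finset.mem_union.mp hi with hi | hi
        · exact Finset.mem_union.mpr (Or.inl (Finset.mem_union.mpr (Or.inl
            (Finset.mem_union.mpr (Or.inl (hNmap i hi))))))
        · exact Finset.mem_union.mpr (Or.inl (Finset.mem_union.mpr (Or.inl
            (Finset.mem_union.mpr (Or.inr (hDmap 0 i hi))))))
      · exact Finset.mem_union.mpr (Or.inl (Finset.mem_union.mpr (Or.inr (hDmap 1 i hi))))
    · exact Finset.mem_union.mpr (Or.inr (hDmap 2 i hi))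
  -- every element of S is < n
  have hlt : ∀ i ∈ S, i < n := by
    intro i hi
    rw [hS, whitemanSIdx] at hi
    have hD : ∀ j, i ∈ whitemanD n1 n2 g x j → i < n := by
      intro j hj
      obtain ⟨s, _, rfl⟩ := Finset.mem_image.mp hj
      exact Nat.mod_lt _ hnpos
    rcases Finset.mem_union.mp hi with hi | hi
    · rcases Finset.mem_union.mp hi with hi | hi
      · rcases Finset.mem_union.mp hi with hi | hi
        · obtain ⟨k, hk, rfl⟩ := Finset.mem_image.mp hi
          rw [Finset.mem_Icc] at hk
          have : k < n2 := by omega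
          calc k * n1 < n2 * n1 := by
                exact Nat.mul_lt_mul_of_pos_right this hn1_pos
            _ = n := by rw [hn]; ring
        · exact hD 0 hi
      · exact hD 1 hi
    · exact hD 2 hi
  -- σ is injective on S
  have hqunit : IsUnit ((q : ZMod n) ^ 3) := ((ZMod.isUnit_iff_coprime q n).mpr hq).pow 3
  have hinj : Set.InjOn σ ↑S := by
    intro i hi j hj hij
    have h1 : ((i * q ^ 3 : ℕ) : ZMod n) = ((j * q ^ 3 : ℕ) : ZMod n) := by
      rw [← ZMod.natCast_mod, ← ZMod.natCast_mod (j * q ^ 3)]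
      exact congrArg _ hij
    push_cast at h1
    have h2 : (i : ZMod n) = (j : ZMod n) := by
      rw [mul_comm (i : ZMod n), mul_comm (j : ZMod n)] at h1
      exact hqunit.mul_left_cancel h1
    have := hmodeq _ _ h2
    rw [Nat.mod_eq_of_lt (hlt i hi), Nat.mod_eq_of_lt (hlt j hj)] at this
    exact this
  -- the image of S under σ is S
  have himg : S.image σ = S := by
    apply Finset.eq_of_subset_of_card_le
    · intro a ha
      obtain ⟨i, hi, rfl⟩ := Finset.mem_image.mp ha
      exact hmap i hi
    · rw [Finset.card_image_of_injOn hinj]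
  -- Frobenius step
  obtain ⟨p, hchar⟩ := CharP.exists F
  obtain ⟨m, hp, hqp⟩ := FiniteField.card F p
  haveI : CharP K p := charP_of_injective_algebraMap (algebraMap F K).injective p
  haveI : Fact p.Prime := ⟨hp⟩
  rw [hcard] at hqp
  have hfrob : (∑ i ∈ S, β ^ i) ^ q ^ 3 = ∑ i ∈ S, (β ^ i) ^ q ^ 3 := by
    rw [hqp, ← pow_mul]
    exact sum_pow_char_pow p ((m : ℕ) * 3) S _
  -- β powers reduce mod n
  have hβord : n = orderOf β := hβ.eq_orderOf
  have hred : ∀ i : ℕ, (β ^ i) ^ q ^ 3 = β ^ σ i := by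
    intro i
    show (β ^ i) ^ q ^ 3 = β ^ (i * q ^ 3 % n)
    conv_rhs => rw [hβord]
    rw [← pow_mul]
    exact (pow_mod_orderOf β (i * q ^ 3)).symm
  calc (∑ i ∈ S, β ^ i) ^ q ^ 3 = ∑ i ∈ S, (β ^ i) ^ q ^ 3 := hfrob
    _ = ∑ i ∈ S, β ^ σ i := Finset.sum_congr rfl fun i _ => hred i
    _ = ∑ j ∈ S.image σ, β ^ j := (Finset.sum_image fun a ha b hb h => hinj ha hb h).symm
    _ = ∑ i ∈ S, β ^ i := by rw [himg]
end

section
/- Let $q$ be a prime power, $n_1, n_2$ distinct odd primes with $\gcd(q, n_1 n_2)=1$, $n = n_1 n_2$. The cyclic code over $\mathrm{GF}(q)$ of length $n$ with generator polynomial $g(x) = \frac{(x^n-1)(x-1)}{(x^{n_1}-1)(x^{n_2}-1)}$ has dimension $n_1 + n_2 - 1$ and minimum Hamming distance exactly $\min(n_1, n_2)$. -/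
open Finset Polynomial

/-! Write `S k = 1 + X + ⋯ + X^(k-1)`. The hypothesis on `g` gives
`g * S n₂ = P := Σ_{j<n₂} X^(j n₁)` and `g * S n₁ = Q := Σ_{j<n₁} X^(j n₂)`. Since `S n₁` and
`S n₂` are coprime of degrees `n₁ - 1` and `n₂ - 1`, every codeword is `a P + b Q` with
`deg a < n₁`, `deg b < n₂`; its coefficient at `i < n₁ n₂` is `a_(i mod n₁) + b_(i mod n₂)`, so by
the Chinese remainder theorem its weight is the number of nonzero entries of the `n₁ × n₂` array
`a_u + b_v`. If some row of that array vanishes, `b` is constant and every nonzero row has no zero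
entry; otherwise every row has a nonzero entry. Either way a nonzero codeword has weight at least
`min n₁ n₂`, and `Q`, `P` have weights `n₁`, `n₂`. -/

/-- The cyclic code of "dimension" `k` generated by `g`: the `F`-span of
`g, g*X, ..., g*X^(k-1)`, i.e. the polynomial representation of the cyclic code
of length `n` with generator polynomial `g` when `k = n - deg g`. -/
noncomputable def polyCode (F : Type*) [Field F] (g : Polynomial F) (k : ℕ) : Submodule F (Polynomial F) :=
  Submodule.span F {p : Polynomial F | ∃ i < k, p = g * Polynomial.X ^ i}


namespace Polynomial

theorem X_pow_sub_one_ne_zero {R : Type*} [Ring R] [Nontrivial R] {m : ℕ} (hm : m ≠ 0) :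
    (X : R[X]) ^ m - 1 ≠ 0 := by
  simpa using X_pow_sub_C_ne_zero (Nat.pos_of_ne_zero hm) (1 : R)

theorem X_sub_one_ne_zero {R : Type*} [Ring R] [Nontrivial R] : (X : R[X]) - 1 ≠ 0 := by
  simpa using X_sub_C_ne_zero (1 : R)

theorem natDegree_geom_sum_X {R : Type*} [Semiring R] [Nontrivial R] (m : ℕ) :
    (∑ i ∈ range m, (X : R[X]) ^ i).natDegree = m - 1 := by
  refine le_antisymm (natDegree_sum_le_of_forall_le _ _ fun i hi ↦
    (natDegree_X_pow_le i).trans (by rw [mem_range] at hi; omega)) ?_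
  cases m with
  | zero => simp
  | succ m => exact le_natDegree_of_ne_zero (by simp [coeff_X_pow])

section Domain

variable {R : Type*} [CommRing R] [IsDomain R]

theorem geom_sum_X_dvd_geom_sum_X_mul (m a : ℕ) :
    ∑ i ∈ range m, (X : R[X]) ^ i ∣ ∑ i ∈ range (m * a), (X : R[X]) ^ i := by
  refine (mul_dvd_mul_iff_right X_sub_one_ne_zero).1 ?_
  rw [geom_sum_mul, geom_sum_mul]
  exact pow_one_sub_dvd_pow_mul_sub_one X m a

theorem isCoprime_geom_sum_X_of_mul_eq_mul_add_one {m n a b : ℕ} (h : m * a = n * b + 1) :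
    IsCoprime (∑ i ∈ range m, (X : R[X]) ^ i) (∑ i ∈ range n, (X : R[X]) ^ i) := by
  obtain ⟨A, hA⟩ := geom_sum_X_dvd_geom_sum_X_mul (R := R) m a
  obtain ⟨B, hB⟩ := geom_sum_X_dvd_geom_sum_X_mul (R := R) n b
  rw [h, geom_sum_succ] at hA
  exact ⟨A, -(X * B), by linear_combination -hA + X * hB⟩

theorem isCoprime_geom_sum_X {m n : ℕ} (h : m.Coprime n) :
    IsCoprime (∑ i ∈ range m, (X : R[X]) ^ i) (∑ i ∈ range n, (X : R[X]) ^ i) := by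
  rcases lt_or_ge 1 n with hn | hn
  · obtain ⟨a, -, ha⟩ := Nat.exists_mul_mod_eq_one_of_coprime h hn
    exact isCoprime_geom_sum_X_of_mul_eq_mul_add_one (b := m * a / n)
      (by rw [← ha, Nat.div_add_mod])
  · interval_cases n
    · rw [(Nat.coprime_zero_right m).1 h, geom_sum_one]
      exact isCoprime_one_left
    · rw [geom_sum_one]
      exact isCoprime_one_right

end Domain

theorem exists_eq_mul_add_mul_of_isCoprime {K : Type*} [Field K] {p q f : K[X]} (hp : p ≠ 0)
    (hpq : IsCoprime p q) (hf : f.natDegree ≤ p.natDegree + q.natDegree) :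
    ∃ a b : K[X], a.degree < p.degree ∧ b.natDegree ≤ q.natDegree ∧ f = a * q + b * p := by
  obtain ⟨u, v, huv⟩ := hpq
  set a := f * v % p
  set b := f * u + q * (f * v / p)
  have hfab : f = a * q + b * p := by
    linear_combination (-f) * huv - q * EuclideanDomain.mod_add_div (f * v) p
  have ha : a.degree < p.degree := degree_mod_lt _ hp
  refine ⟨a, b, ha, ?_, hfab⟩
  rcases eq_or_ne b 0 with hb | hb
  · simp [hb]
  have : b.natDegree + p.natDegree ≤ p.natDegree + q.natDegree := by
    rw [← natDegree_mul hb hp, eq_sub_of_add_eq' hfab.symm]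
    exact (natDegree_sub_le _ _).trans (max_le hf (natDegree_mul_le.trans
      (Nat.add_le_add_right (natDegree_le_natDegree ha.le) _)))
  omega

theorem coeff_mul_geom_sum_X_pow {R : Type*} [Semiring R] {a : R[X]} {m : ℕ}
    (ha : a.degree < m) (k i : ℕ) :
    (a * ∑ j ∈ range k, (X ^ m) ^ j).coeff i = if i < k * m then a.coeff (i % m) else 0 := by
  induction k with
  | zero => simp
  | succ k ih =>
    rw [sum_range_succ, mul_add, coeff_add, ih, ← pow_mul, mul_comm m k, coeff_mul_X_pow']
    rcases lt_or_ge i (k * m) with hi | hi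
    · simp [hi, hi.trans_le (Nat.mul_le_mul_right m k.le_succ), hi.not_ge]
    rcases lt_or_ge i ((k + 1) * m) with hi' | hi'
    · rw [Nat.mod_eq_sub_mul_div, Nat.div_eq_of_lt_le hi hi', mul_comm m k]
      simp [hi.not_gt, hi', hi]
    · have : a.coeff (i - k * m) = 0 :=
        coeff_eq_zero_of_degree_lt (ha.trans_le (by norm_cast; rw [add_one_mul] at hi'; omega))
      simp [hi.not_gt, hi'.not_gt, hi, this]

theorem card_support_mul_geom_sum_add_mul_geom_sum {R : Type*} [Semiring R] [DecidableEq R]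
    {m n : ℕ} (hmn : m.Coprime n) {a b : R[X]} (ha : a.degree < m) (hb : b.degree < n) :
    #(a * ∑ j ∈ range n, (X ^ m) ^ j + b * ∑ j ∈ range m, (X ^ n) ^ j).support =
      #{p ∈ range m ×ˢ range n | a.coeff p.1 + b.coeff p.2 ≠ 0} := by
  set c := a * ∑ j ∈ range n, (X ^ m) ^ j + b * ∑ j ∈ range m, (X ^ n) ^ j
  have hc : ∀ i, i ∈ c.support ↔ i < m * n ∧ a.coeff (i % m) + b.coeff (i % n) ≠ 0 := by
    intro i
    rw [mem_support_iff, coeff_add, coeff_mul_geom_sum_X_pow ha, coeff_mul_geom_sum_X_pow hb,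
      mul_comm n m]
    split_ifs with hi <;> simp [hi]
  have hcrt : ∀ u v, (Nat.chineseRemainder hmn u v : ℕ) % m = u % m ∧
      (Nat.chineseRemainder hmn u v : ℕ) % n = v % n :=
    fun u v ↦ (Nat.chineseRemainder hmn u v).2
  refine card_nbij' (fun i ↦ (i % m, i % n)) (fun p ↦ Nat.chineseRemainder hmn p.1 p.2)
    ?_ ?_ ?_ ?_
  · intro i hi
    obtain ⟨hlt, hne⟩ := (hc i).1 hi
    obtain ⟨hm, hn⟩ := CanonicallyOrderedAdd.mul_pos.1 (Nat.zero_lt_of_lt hlt)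
    simp [Nat.mod_lt, hne, hm, hn]
  · rintro ⟨u, v⟩ hp
    obtain ⟨⟨hu, hv⟩, huv⟩ : (u < m ∧ v < n) ∧ a.coeff u + b.coeff v ≠ 0 := by
      simpa using hp
    refine (hc _).2 ⟨Nat.chineseRemainder_lt_mul hmn u v (by omega) (by omega), ?_⟩
    rwa [(hcrt u v).1, (hcrt u v).2, Nat.mod_eq_of_lt hu, Nat.mod_eq_of_lt hv]
  · intro i hi
    have hlt := ((hc i).1 hi).1
    obtain ⟨hm, hn⟩ := CanonicallyOrderedAdd.mul_pos.1 (Nat.zero_lt_of_lt hlt)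
    exact ((Nat.chineseRemainder_modEq_unique hmn (Nat.mod_modEq i m).symm
      (Nat.mod_modEq i n).symm).eq_of_lt_of_lt hlt
      (Nat.chineseRemainder_lt_mul _ _ _ hm.ne' hn.ne')).symm
  · rintro ⟨u, v⟩ hp
    obtain ⟨hu, hv⟩ : u < m ∧ v < n := by simp_all
    simp [(hcrt u v).1, (hcrt u v).2, Nat.mod_eq_of_lt hu, Nat.mod_eq_of_lt hv]

theorem card_support_geom_sum_X_pow {R : Type*} [Semiring R] [Nontrivial R] {n : ℕ} (hn : n ≠ 0)
    (m : ℕ) : #(∑ j ∈ range m, ((X : R[X]) ^ n) ^ j).support = m := by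
  have := card_support_eq' (R := R) (fun i : Fin m ↦ (i : ℕ) * n) (fun _ ↦ 1)
    (fun i j h ↦ Fin.ext (Nat.eq_of_mul_eq_mul_right (Nat.pos_of_ne_zero hn) h))
    (fun _ ↦ one_ne_zero)
  simpa [Fin.sum_univ_eq_sum_range (fun i ↦ (X : R[X]) ^ (i * n)), ← pow_mul, mul_comm n]
    using this

theorem mul_X_pow_sub_one_mul_X_pow_sub_one_comm {R : Type*} [CommRing R] {g : R[X]} {m n : ℕ}
    (hg : g * ((X ^ m - 1) * (X ^ n - 1)) = (X ^ (m * n) - 1) * (X - 1)) :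
    g * ((X ^ n - 1) * (X ^ m - 1)) = (X ^ (n * m) - 1) * (X - 1) := by
  rw [mul_comm (X ^ n - 1), mul_comm n, hg]

theorem mul_geom_sum_X_eq_geom_sum_X_pow {R : Type*} [CommRing R] [IsDomain R] {g : R[X]}
    {m n : ℕ} (hm : m ≠ 0)
    (hg : g * ((X ^ m - 1) * (X ^ n - 1)) = (X ^ (m * n) - 1) * (X - 1)) :
    g * ∑ i ∈ range n, X ^ i = ∑ j ∈ range n, (X ^ m) ^ j := by
  refine mul_right_cancel₀ (mul_ne_zero (X_pow_sub_one_ne_zero hm) X_sub_one_ne_zero) ?_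
  rw [show (g * ∑ i ∈ range n, X ^ i) * ((X ^ m - 1) * (X - 1)) =
      g * ((X ^ m - 1) * ((∑ i ∈ range n, X ^ i) * (X - 1))) by ring,
    geom_sum_mul, hg, pow_mul, ← geom_sum_mul (X ^ m) n]
  ring

end Polynomial

theorem Finset.min_le_card_filter_add_ne_zero {G : Type*} [AddGroup G] [DecidableEq G] {m n : ℕ}
    {α β : ℕ → G} (h : ∃ u < m, ∃ v < n, α u + β v ≠ 0) :
    min m n ≤ #{p ∈ range m ×ˢ range n | α p.1 + β p.2 ≠ 0} := by
  by_cases hrows : ∀ u < m, ∃ v < n, α u + β v ≠ 0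
  · refine (min_le_left m n).trans ?_
    calc m = #(range m) := (card_range m).symm
      _ ≤ #({p ∈ range m ×ˢ range n | α p.1 + β p.2 ≠ 0}.image Prod.fst) := by
        refine card_le_card fun u hu ↦ ?_
        obtain ⟨v, hv, huv⟩ := hrows u (mem_range.1 hu)
        exact mem_image.2 ⟨(u, v), by simp [mem_range.1 hu, hv, huv], rfl⟩
      _ ≤ _ := card_image_le
  · push Not at hrows
    obtain ⟨u₀, -, hu₀⟩ := hrows
    obtain ⟨u, hu, v, hv, huv⟩ := h
    have hrow : ∀ w < n, α u + β w ≠ 0 := by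
      intro w hw
      rwa [eq_neg_of_add_eq_zero_right (hu₀ w hw), ← eq_neg_of_add_eq_zero_right (hu₀ v hv)]
    refine (min_le_right m n).trans ?_
    calc n = #({u} ×ˢ range n) := by simp
      _ ≤ _ := card_le_card fun p hp ↦ by
        obtain ⟨w, hw, rfl⟩ : ∃ w < n, (u, w) = p := by simpa using hp
        simp [hu, hw, hrow w hw]

section PolyCode

variable {K : Type*} [Field K]

theorem polyCode_eq_map_degreeLT (g : K[X]) (k : ℕ) :
    polyCode K g k = (degreeLT K k).map (LinearMap.mulLeft K g) := by
  classical
  rw [degreeLT_eq_span_X_pow, Submodule.map_span, polyCode, coe_image]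
  congr 1
  ext p
  simp [eq_comm]

theorem mem_polyCode {g c : K[X]} {k : ℕ} :
    c ∈ polyCode K g k ↔ ∃ f : K[X], f.degree < k ∧ g * f = c := by
  simp [polyCode_eq_map_degreeLT, mem_degreeLT]

theorem finrank_polyCode {g : K[X]} (hg : g ≠ 0) (k : ℕ) :
    Module.finrank K (polyCode K g k) = k := by
  rw [polyCode_eq_map_degreeLT, ← (Submodule.equivMapOfInjective _
      (mul_right_injective₀ hg) (degreeLT K k)).finrank_eq, (degreeLTEquiv K k).finrank_eq,
    Module.finrank_fin_fun]

end PolyCode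

section CyclicCode

variable {K : Type*} [Field K] {g : K[X]} {m n : ℕ}

theorem exists_eq_add_of_mem_polyCode (hm : m ≠ 0) (hn : n ≠ 0) (hmn : m.Coprime n)
    (hg : g * ((X ^ m - 1) * (X ^ n - 1)) = (X ^ (m * n) - 1) * (X - 1)) {c : K[X]}
    (hc : c ∈ polyCode K g (m + n - 1)) :
    ∃ a b : K[X], a.degree < m ∧ b.degree < n ∧
      c = a * ∑ j ∈ range n, (X ^ m) ^ j + b * ∑ j ∈ range m, (X ^ n) ^ j := by
  obtain ⟨f, hf, rfl⟩ := mem_polyCode.1 hc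
  have hf' : f.natDegree ≤ m - 1 + (n - 1) := by
    rcases eq_or_ne f 0 with rfl | hf0
    · simp
    · have := (natDegree_lt_iff_degree_lt hf0).2 hf
      omega
  obtain ⟨a, b, ha, hb, rfl⟩ := exists_eq_mul_add_mul_of_isCoprime (f := f)
    (monic_geom_sum_X hm).ne_zero (isCoprime_geom_sum_X (R := K) hmn)
    (by rwa [natDegree_geom_sum_X, natDegree_geom_sum_X])
  refine ⟨a, b, ha.trans_le (degree_le_natDegree.trans ?_), ?_, ?_⟩
  · rw [natDegree_geom_sum_X]
    exact_mod_cast Nat.sub_le m 1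
  · rw [natDegree_geom_sum_X] at hb
    exact degree_le_natDegree.trans_lt (by exact_mod_cast (by omega : b.natDegree < n))
  · linear_combination a * mul_geom_sum_X_eq_geom_sum_X_pow hm hg +
      b * mul_geom_sum_X_eq_geom_sum_X_pow hn (mul_X_pow_sub_one_mul_X_pow_sub_one_comm hg)

theorem min_le_card_support_of_mem_polyCode (hm : m ≠ 0) (hn : n ≠ 0) (hmn : m.Coprime n)
    (hg : g * ((X ^ m - 1) * (X ^ n - 1)) = (X ^ (m * n) - 1) * (X - 1)) {c : K[X]}
    (hc : c ∈ polyCode K g (m + n - 1)) (hc0 : c ≠ 0) :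
    min m n ≤ #c.support := by
  classical
  obtain ⟨a, b, ha, hb, rfl⟩ := exists_eq_add_of_mem_polyCode hm hn hmn hg hc
  have hpos := card_pos.2 (support_nonempty.2 hc0)
  rw [card_support_mul_geom_sum_add_mul_geom_sum hmn ha hb] at hpos ⊢
  obtain ⟨⟨u, v⟩, huv⟩ := card_pos.1 hpos
  simp only [mem_filter, mem_product, mem_range] at huv
  exact min_le_card_filter_add_ne_zero ⟨u, huv.1.1, v, huv.1.2, huv.2⟩

theorem exists_mem_polyCode_card_support_eq (hm : m ≠ 0) (hn : n ≠ 0)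
    (hg : g * ((X ^ m - 1) * (X ^ n - 1)) = (X ^ (m * n) - 1) * (X - 1)) :
    ∃ c ∈ polyCode K g (m + n - 1), c ≠ 0 ∧ #c.support = m := by
  refine ⟨_, mem_polyCode.2 ⟨_, ?_, mul_geom_sum_X_eq_geom_sum_X_pow hn
    (mul_X_pow_sub_one_mul_X_pow_sub_one_comm hg)⟩, ?_,
    card_support_geom_sum_X_pow hn m⟩
  · refine degree_le_natDegree.trans_lt ?_
    rw [natDegree_geom_sum_X]
    exact_mod_cast (by omega : m - 1 < m + n - 1)
  · intro h
    have := card_support_geom_sum_X_pow (R := K) hn m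
    rw [h, support_zero, card_empty] at this
    exact hm this.symm

end CyclicCode

theorem code_Cn1n2_params_general
    (n1 n2 : ℕ) (hp1 : n1.Prime) (hp2 : n2.Prime) (hne : n1 ≠ n2)
    (F : Type*) [Field F]
    (g : Polynomial F)
    (hg : g * (((X : Polynomial F) ^ n1 - 1) * ((X : Polynomial F) ^ n2 - 1)) =
      ((X : Polynomial F) ^ (n1 * n2) - 1) * (X - 1)) :
    Module.finrank F (polyCode F g (n1 + n2 - 1)) = n1 + n2 - 1 ∧
    (∀ c ∈ polyCode F g (n1 + n2 - 1), c ≠ 0 → min n1 n2 ≤ c.support.card) ∧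
    (∃ c ∈ polyCode F g (n1 + n2 - 1), c ≠ 0 ∧ c.support.card = min n1 n2) := by
  have hcop : n1.Coprime n2 := (Nat.coprime_primes hp1 hp2).2 hne
  have hg0 : g ≠ 0 := by
    refine left_ne_zero_of_mul (b := (X ^ n1 - 1) * (X ^ n2 - 1)) ?_
    rw [hg]
    exact mul_ne_zero (X_pow_sub_one_ne_zero (mul_ne_zero hp1.ne_zero hp2.ne_zero))
      X_sub_one_ne_zero
  refine ⟨finrank_polyCode hg0 _, fun c hc hc0 ↦
    min_le_card_support_of_mem_polyCode hp1.ne_zero hp2.ne_zero hcop hg hc hc0, ?_⟩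
  rcases min_choice n1 n2 with h | h <;> rw [h]
  · exact exists_mem_polyCode_card_support_eq hp1.ne_zero hp2.ne_zero hg
  · rw [add_comm n1 n2]
    exact exists_mem_polyCode_card_support_eq hp2.ne_zero hp1.ne_zero
      (mul_X_pow_sub_one_mul_X_pow_sub_one_comm hg)

theorem code_Cn1n2_params
    (q : ℕ) (n1 n2 : ℕ) (hp1 : n1.Prime) (hp2 : n2.Prime) (hne : n1 ≠ n2)
    (ho1 : Odd n1) (ho2 : Odd n2)
    (F : Type*) [Field F] [Fintype F] (hcard : Fintype.card F = q)
    (hq : Nat.Coprime q (n1 * n2))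
    (g : Polynomial F)
    (hg : g * (((X : Polynomial F) ^ n1 - 1) * ((X : Polynomial F) ^ n2 - 1)) =
      ((X : Polynomial F) ^ (n1 * n2) - 1) * (X - 1)) :
    Module.finrank F (polyCode F g (n1 + n2 - 1)) = n1 + n2 - 1 ∧
    (∀ c ∈ polyCode F g (n1 + n2 - 1), c ≠ 0 → min n1 n2 ≤ c.support.card) ∧
    (∃ c ∈ polyCode F g (n1 + n2 - 1), c ≠ 0 ∧ c.support.card = min n1 n2) :=
  code_Cn1n2_params_general n1 n2 hp1 hp2 hne F g hg
end
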